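/- arXiv:2101.11373 — 8 statements merged into one kernel-verified Lean document; each statement's English description precedes it below -/
import Mathlib

section
/- With E and ω_{k,i} as above, for every tuple k = (k_1,...,k_n) with 0 ≤ k_i ≤ a_i - 1 for i < n and 0 ≤ k_n ≤ a_n - 2, we have 0 < ω_{k,i} < 1 for all i = 1,...,n. -/
/-- For k with 0 ≤ k_i ≤ a_i - 1 (i < n) and 0 ≤ k_n ≤ a_n - 2, each rational
weight ω_{k,i} lies strictly between 0 and 1. -/
theorem chain_weights_between_zero_one (n : ℕ) (hn : 1 ≤ n) (a : ℕ → ℕ)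
    (ha : ∀ i, 2 ≤ a i)
    (E : Matrix (Fin n) (Fin n) ℚ)
    (hE : ∀ i j, E i j = (a (i.1 + 1) : ℚ) * (if i = j then 1 else 0) +
      (if i.1 + 1 = j.1 then 1 else 0))
    (k : Fin n → ℕ)
    (hk : ∀ i : Fin n, k i ≤ (if i.1 + 1 = n then a n - 2 else a (i.1 + 1) - 1))
    (ω : Fin n → ℚ)
    (hω : ω = Matrix.vecMul (fun i => (k i : ℚ) + 1) (E⁻¹).transpose) :
    ∀ i : Fin n, 0 < ω i ∧ ω i < 1 := by
  set v : Fin n → ℚ := fun i => (k i : ℚ) + 1 with hv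
  have hdet : IsUnit E.det := by
    have htri : E.det = ∏ i, E i i := by
      apply Matrix.det_of_upperTriangular
      intro i j hij
      have hji : j.1 < i.1 := hij
      have h1 : ¬ i = j := by
        intro h; rw [h] at hji; omega
      have h2 : ¬ (i.1 + 1 = j.1) := by omega
      rw [hE, if_neg h1, if_neg h2]; ring
    rw [htri]
    apply isUnit_iff_ne_zero.mpr
    rw [Finset.prod_ne_zero_iff]
    intro i _
    rw [hE, if_pos rfl]
    have h2 : ¬ (i.1 + 1 = i.1) := by omega
    rw [if_neg h2]
    have := ha (i.1 + 1)
    have : (2:ℚ) ≤ (a (i.1+1) : ℚ) := by exact_mod_cast this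
    nlinarith
  have hmul : E.mulVec ω = v := by
    rw [hω, Matrix.vecMul_transpose, Matrix.mulVec_mulVec,
      Matrix.mul_nonsing_inv E hdet, Matrix.one_mulVec]
  have hrow : ∀ i : Fin n,
      (a (i.1 + 1) : ℚ) * ω i + (if h : i.1 + 1 < n then ω ⟨i.1 + 1, h⟩ else 0)
        = (k i : ℚ) + 1 := by
    intro i
    have hmi := congrFun hmul i
    rw [Matrix.mulVec, dotProduct] at hmi
    have hsum : ∑ j, E i j * ω j
        = (a (i.1 + 1) : ℚ) * ω i
          + (if h : i.1 + 1 < n then ω ⟨i.1 + 1, h⟩ else 0) := by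
      have : ∀ j, E i j * ω j
          = (if i = j then (a (i.1 + 1) : ℚ) * ω j else 0)
            + (if i.1 + 1 = j.1 then ω j else 0) := by
        intro j
        rw [hE]
        by_cases h1 : i = j <;> by_cases h2 : i.1 + 1 = j.1 <;>
          simp [h1, h2] <;> ring
      rw [Finset.sum_congr rfl (fun j _ => this j), Finset.sum_add_distrib,
        Finset.sum_ite_eq]
      simp only [Finset.mem_univ, if_pos]
      congr 1
      by_cases h : i.1 + 1 < n
      · rw [dif_pos h]
        have : ∀ j : Fin n, (i.1 + 1 = j.1) ↔ ((⟨i.1 + 1, h⟩ : Fin n) = j) := by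
          intro j
          constructor
          · intro hj; exact Fin.ext hj
          · intro hj; exact congrArg Fin.val hj
        rw [Finset.sum_congr rfl (fun j _ => by rw [if_congr (this j) rfl rfl]),
          Finset.sum_ite_eq]
        simp
      · rw [dif_neg h]
        apply Finset.sum_eq_zero
        intro j _
        have : ¬ (i.1 + 1 = j.1) := by
          have := j.2; omega
        rw [if_neg this]
    rw [hsum] at hmi
    exact hmi
  -- backward induction
  have main : ∀ m : ℕ, ∀ i : Fin n, n - i.1 ≤ m + 1 → 0 < ω i ∧ ω i < 1 := by
    intro m
    induction m with
    | zero =>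
      intro i hi
      have hlast : i.1 + 1 = n := by have := i.2; omega
      have hr := hrow i
      rw [dif_neg (by omega)] at hr
      have hki := hk i
      rw [if_pos hlast] at hki
      have hA : 2 ≤ a n := ha n
      have hka : (k i : ℚ) + 2 ≤ (a n : ℚ) := by
        have : k i + 2 ≤ a n := by omega
        exact_mod_cast this
      have hAq : (0:ℚ) < (a n : ℚ) := by positivity
      rw [hlast] at hr
      constructor
      · nlinarith [Nat.cast_nonneg (α := ℚ) (k i)]
      · nlinarith
    | succ m ih =>
      intro i hi
      by_cases hlast : i.1 + 1 = n
      · -- same as base case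
        have hr := hrow i
        rw [dif_neg (by omega)] at hr
        have hki := hk i
        rw [if_pos hlast] at hki
        have hA : 2 ≤ a n := ha n
        have hka : (k i : ℚ) + 2 ≤ (a n : ℚ) := by
          have : k i + 2 ≤ a n := by omega
          exact_mod_cast this
        have hAq : (0:ℚ) < (a n : ℚ) := by positivity
        rw [hlast] at hr
        constructor
        · nlinarith [Nat.cast_nonneg (α := ℚ) (k i)]
        · nlinarith
      · have hlt : i.1 + 1 < n := by have := i.2; omega
        have hj := ih ⟨i.1 + 1, hlt⟩ (by simp; omega)
        have hr := hrow i
        rw [dif_pos hlt] at hr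
        have hki := hk i
        rw [if_neg hlast] at hki
        have hA : 2 ≤ a (i.1 + 1) := ha _
        have hka : (k i : ℚ) + 1 ≤ (a (i.1 + 1) : ℚ) := by
          have : k i + 1 ≤ a (i.1 + 1) := by omega
          exact_mod_cast this
        have hAq : (0:ℚ) < (a (i.1 + 1) : ℚ) := by positivity
        obtain ⟨hj1, hj2⟩ := hj
        constructor
        · nlinarith [Nat.cast_nonneg (α := ℚ) (k i)]
        · nlinarith
  intro i
  exact main n i (by omega)
end

section
/- The map ψ(k_1,...,k_n) := Σ_{l=1}^n (-1)^{l-1} (d_n/d_l)(k_l + 1) is a bijection from the set {(k_1,...,k_n) : 0 ≤ k_i ≤ a_i - 1 for i = 1,...,n-1, 0 ≤ k_n ≤ a_n - 2} onto I'_n := {κ ∈ {1,...,d_n} : a_n ∤ κ}; in particular both sets have d_n - d_{n-1} elements. -/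
open Finset

namespace ChainPsiAux

/-- weight: product of `a j` for `j ∈ (l, n]`. -/
def Wt (a : ℕ → ℕ) (n l : ℕ) : ℕ := ∏ j ∈ Finset.Icc (l+1) n, a j

/-- mixed-radix value. -/
def Ff (a : ℕ → ℕ) (n : ℕ) (k : ℕ → ℕ) : ℕ := ∑ l ∈ Finset.Icc 1 n, Wt a n l * k l

def Dd (a : ℕ → ℕ) (n : ℕ) : ℕ := ∏ j ∈ Finset.Icc 1 n, a j

def BoxS (a : ℕ → ℕ) (n : ℕ) : Set (ℕ → ℕ) :=
  {k | (∀ i, 1 ≤ i → i ≤ n → k i < a i) ∧ ∀ i, i = 0 ∨ n < i → k i = 0}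

/-- complement on even coordinates in `[1, n]`. -/
def Cc (a : ℕ → ℕ) (n : ℕ) (k : ℕ → ℕ) (i : ℕ) : ℕ :=
  if i % 2 = 0 ∧ 1 ≤ i ∧ i ≤ n then a i - 1 - k i else k i

def Psi (a : ℕ → ℕ) (n : ℕ) (k : ℕ → ℕ) : ℤ :=
  ∑ l ∈ Finset.Icc 1 n, (-1 : ℤ) ^ (l - 1) * (Wt a n l : ℤ) * ((k l : ℤ) + 1)

lemma Wt_self (a : ℕ → ℕ) (n : ℕ) : Wt a n n = 1 := by simp [Wt]

lemma Wt_succ (a : ℕ → ℕ) {n l : ℕ} (h : l ≤ n) :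
    Wt a (n+1) l = Wt a n l * a (n+1) := by
  rw [Wt, Wt, Finset.prod_Icc_succ_top (by omega)]

lemma Dd_succ (a : ℕ → ℕ) (n : ℕ) : Dd a (n+1) = Dd a n * a (n+1) := by
  rw [Dd, Dd, Finset.prod_Icc_succ_top (by omega)]

lemma Dd_pos (a : ℕ → ℕ) (ha : ∀ i, 2 ≤ a i) (n : ℕ) : 0 < Dd a n :=
  Finset.prod_pos fun i _ => by have := ha i; omega

lemma Ff_succ (a : ℕ → ℕ) (n : ℕ) (k : ℕ → ℕ) :
    Ff a (n+1) k = a (n+1) * Ff a n k + k (n+1) := by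
  rw [Ff, Finset.sum_Icc_succ_top (by omega), Wt_self, Ff, Finset.mul_sum]
  congr 1
  · exact Finset.sum_congr rfl fun l hl => by
      rw [Wt_succ a (Finset.mem_Icc.mp hl).2]; ring
  · ring

lemma Ff_congr (a : ℕ → ℕ) {n : ℕ} {k k' : ℕ → ℕ}
    (h : ∀ l, 1 ≤ l → l ≤ n → k l = k' l) : Ff a n k = Ff a n k' := by
  unfold Ff
  exact Finset.sum_congr rfl fun l hl => by
    rw [h l (Finset.mem_Icc.mp hl).1 (Finset.mem_Icc.mp hl).2]

lemma Ff_bijOn (a : ℕ → ℕ) (ha : ∀ i, 2 ≤ a i) :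
    ∀ n, Set.BijOn (Ff a n) (BoxS a n) (Set.Iio (Dd a n)) := by
  intro n
  induction n with
  | zero =>
    refine ⟨?_, ?_, ?_⟩
    · intro k _
      simp [Ff, Dd, Set.mem_Iio]
    · intro k hk k' hk' _
      funext i
      rw [hk.2 i (by omega), hk'.2 i (by omega)]
    · intro N hN
      simp only [Set.mem_Iio, Dd, Finset.Icc_self] at hN
      have hN0 : N = 0 := by simpa using hN
      refine ⟨fun _ => 0, ⟨fun i h1 h2 => by omega, fun i _ => rfl⟩, ?_⟩
      simp [Ff, hN0]
  | succ n ih =>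
    have hres : ∀ k ∈ BoxS a (n+1), Function.update k (n+1) 0 ∈ BoxS a n := by
      intro k hk
      refine ⟨fun i h1 h2 => ?_, fun i hi => ?_⟩
      · rw [Function.update_of_ne (by omega)]
        exact hk.1 i h1 (by omega)
      · by_cases h : i = n + 1
        · rw [h, Function.update_self]
        · rw [Function.update_of_ne h]
          exact hk.2 i (by omega)
    have hval : ∀ k : ℕ → ℕ,
        Ff a (n+1) k = a (n+1) * Ff a n (Function.update k (n+1) 0) + k (n+1) := by
      intro k
      rw [Ff_succ]
      congr 2
      exact Ff_congr a fun l h1 h2 => (Function.update_of_ne (by omega) _ _).symm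
    refine ⟨?_, ?_, ?_⟩
    · intro k hk
      have h1 := (ih.mapsTo (hres k hk))
      simp only [Set.mem_Iio] at h1 ⊢
      have h2 : k (n+1) < a (n+1) := hk.1 (n+1) (by omega) le_rfl
      rw [hval, Dd_succ]
      calc a (n+1) * Ff a n (Function.update k (n+1) 0) + k (n+1)
          < a (n+1) * Ff a n (Function.update k (n+1) 0) + a (n+1) := by omega
        _ = a (n+1) * (Ff a n (Function.update k (n+1) 0) + 1) := by ring
        _ ≤ a (n+1) * Dd a n := Nat.mul_le_mul_left _ (by omega)
        _ = Dd a n * a (n+1) := Nat.mul_comm _ _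
    · intro k hk k' hk' he
      rw [hval, hval] at he
      have b1 : k (n+1) < a (n+1) := hk.1 _ (by omega) le_rfl
      have b2 : k' (n+1) < a (n+1) := hk'.1 _ (by omega) le_rfl
      have hmod := congrArg (· % a (n+1)) he
      simp only [Nat.mul_add_mod, Nat.mod_eq_of_lt b1, Nat.mod_eq_of_lt b2] at hmod
      have hq : Ff a n (Function.update k (n+1) 0) = Ff a n (Function.update k' (n+1) 0) := by
        have ha0 : 0 < a (n+1) := by have := ha (n+1); omega
        exact Nat.eq_of_mul_eq_mul_left ha0 (by omega)
      have hupd := ih.injOn (hres k hk) (hres k' hk') hq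
      funext i
      by_cases h : i = n + 1
      · rw [h]; exact hmod
      · have := congrFun hupd i
        rwa [Function.update_of_ne h, Function.update_of_ne h] at this
    · intro N hN
      simp only [Set.mem_Iio, Dd_succ] at hN
      have ha0 : 0 < a (n+1) := by have := ha (n+1); omega
      have hq : N / a (n+1) < Dd a n :=
        Nat.div_lt_of_lt_mul (by rwa [Nat.mul_comm] at hN)
      obtain ⟨m, hm, hFm⟩ := ih.surjOn (Set.mem_Iio.mpr hq)
      refine ⟨Function.update m (n+1) (N % a (n+1)), ⟨fun i h1 h2 => ?_, fun i hi => ?_⟩, ?_⟩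
      · by_cases h : i = n + 1
        · rw [h, Function.update_self]; exact Nat.mod_lt _ ha0
        · rw [Function.update_of_ne h]; exact hm.1 i h1 (by omega)
      · rw [Function.update_of_ne (by omega)]
        exact hm.2 i (by omega)
      · rw [hval, Function.update_self]
        have : Function.update (Function.update m (n+1) (N % a (n+1))) (n+1) 0 = m := by
          funext i
          by_cases h : i = n + 1
          · rw [h, Function.update_self, (hm.2 (n+1) (by omega)).symm]
          · rw [Function.update_of_ne h, Function.update_of_ne h]
        rw [this, hFm, Nat.div_add_mod]

lemma Psi_eq (a : ℕ → ℕ) (n : ℕ) (k : ℕ → ℕ)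
    (hb : ∀ i, 1 ≤ i → i ≤ n → k i < a i) :
    Psi a n k = (Ff a n (Cc a n k) : ℤ) + (if n % 2 = 1 then 1 else 0) := by
  induction n with
  | zero => simp [Psi, Ff]
  | succ n ih =>
    have hIH := ih fun i h1 h2 => hb i h1 (by omega)
    have hsplit : Psi a (n+1) k
        = (a (n+1) : ℤ) * Psi a n k + (-1 : ℤ) ^ n * ((k (n+1) : ℤ) + 1) := by
      rw [Psi, Finset.sum_Icc_succ_top (by omega), Wt_self, Psi, Finset.mul_sum]
      congr 1
      · exact Finset.sum_congr rfl fun l hl => by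
          rw [Wt_succ a (Finset.mem_Icc.mp hl).2]
          push_cast; ring
      · simp
    have hCagree : Ff a n (Cc a (n+1) k) = Ff a n (Cc a n k) := by
      refine Ff_congr a fun l h1 h2 => ?_
      unfold Cc
      by_cases h : l % 2 = 0 <;> simp [h, h1, h2, h2.trans (Nat.le_succ n)]
    rw [hsplit, hIH, Ff_succ, hCagree]
    rcases Nat.even_or_odd n with he | ho
    · have h1 : n % 2 = 0 := Nat.even_iff.mp he
      have hC : Cc a (n+1) k (n+1) = k (n+1) := by
        have : (n+1) % 2 ≠ 0 := by omega
        simp [Cc, this]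
      rw [hC, he.neg_one_pow]
      have h2 : (n+1) % 2 = 1 := by omega
      simp only [h1, h2, if_neg (by omega : ¬ (0:ℕ) = 1), if_pos rfl]
      push_cast; ring
    · have h1 : n % 2 = 1 := Nat.odd_iff.mp ho
      have hk1 : k (n+1) < a (n+1) := hb _ (by omega) le_rfl
      have hC : Cc a (n+1) k (n+1) = a (n+1) - 1 - k (n+1) := by
        have h2 : (n+1) % 2 = 0 := by omega
        simp [Cc, h2]
      have hcast : ((a (n+1) - 1 - k (n+1) : ℕ) : ℤ)
          = (a (n+1) : ℤ) - 1 - (k (n+1) : ℤ) := by omega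
      rw [hC, ho.neg_one_pow]
      have h2 : (n+1) % 2 = 0 := by omega
      simp only [h1, h2, if_pos rfl, if_neg (by omega : ¬ (0:ℕ) = 1)]
      push_cast [hcast]
      ring

end ChainPsiAux

open ChainPsiAux in
/-- The map ψ(k) = Σ_{l=1}^n (-1)^{l-1} (d_n/d_l)(k_l+1) is a bijection from
{k : 0 ≤ k_i ≤ a_i - 1 (i < n), 0 ≤ k_n ≤ a_n - 2} onto
I'_n = {κ ∈ {1,...,d_n} : a_n ∤ κ}; both sets have d_n - d_{n-1} elements. -/
theorem chain_psi_bijection (n : ℕ) (hn : 1 ≤ n) (a : ℕ → ℕ) (ha : ∀ i, 2 ≤ a i)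
    (d : ℕ → ℕ) (hd : ∀ i, d i = ∏ j ∈ Finset.Icc 1 i, a j)
    (ψ : (ℕ → ℕ) → ℤ)
    (hψ : ∀ k, ψ k = ∑ l ∈ Finset.Icc 1 n,
      (-1 : ℤ) ^ (l - 1) * ((d n : ℤ) / (d l : ℤ)) * ((k l : ℤ) + 1))
    (K : Set (ℕ → ℕ))
    (hK : K = {k : ℕ → ℕ |
      (∀ i, 1 ≤ i → i ≤ n → k i ≤ (if i = n then a n - 2 else a i - 1)) ∧
      (∀ i, i = 0 ∨ n < i → k i = 0)})
    (I : Set ℤ)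
    (hI : I = {κ : ℤ | 1 ≤ κ ∧ κ ≤ (d n : ℤ) ∧ ¬ ((a n : ℤ) ∣ κ)}) :
    Set.BijOn ψ K I ∧ Nat.card K = d n - d (n - 1) ∧ Nat.card I = d n - d (n - 1) := by
  obtain ⟨t, rfl⟩ : ∃ t, n = t + 1 := ⟨n - 1, by omega⟩
  have hdD : ∀ i, d i = Dd a i := hd
  have hIoc : ∀ x : ℕ, Finset.Icc 1 x = Finset.Ioc 0 x := by
    intro x; rw [← Finset.Icc_add_one_left_eq_Ioc, zero_add]
  -- the integer division is exact
  have hWdiv : ∀ l, 1 ≤ l → l ≤ t + 1 →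
      ((d (t+1) : ℤ) / (d l : ℤ)) = (Wt a (t+1) l : ℤ) := by
    intro l h1 h2
    have hfac : d (t+1) = d l * Wt a (t+1) l := by
      rw [hd, hd, Wt, hIoc, hIoc, ← Finset.prod_Ioc_consecutive _ (Nat.zero_le l) h2,
        Finset.Icc_add_one_left_eq_Ioc]
    have hpos : 0 < d l := by rw [hdD]; exact Dd_pos a ha l
    rw [hfac]
    push_cast
    rw [Int.mul_ediv_cancel_left _ (by exact_mod_cast hpos.ne')]
  have hψPsi : ∀ k, ψ k = Psi a (t+1) k := by
    intro k
    rw [hψ, Psi]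
    exact Finset.sum_congr rfl fun l hl => by
      rw [hWdiv l (Finset.mem_Icc.mp hl).1 (Finset.mem_Icc.mp hl).2]
  have hKiff : ∀ k : ℕ → ℕ, k ∈ K ↔
      ((∀ i, 1 ≤ i → i ≤ t+1 → k i ≤ (if i = t+1 then a (t+1) - 2 else a i - 1)) ∧
      (∀ i, i = 0 ∨ t+1 < i → k i = 0)) := fun k => by rw [hK]; rfl
  have hKsub : K ⊆ BoxS a (t+1) := by
    intro k hk
    rw [hKiff] at hk
    refine ⟨fun i h1 h2 => ?_, hk.2⟩
    have h0 := hk.1 i h1 h2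
    have h2a := ha i
    by_cases hi : i = t + 1
    · subst hi; rw [if_pos rfl] at h0; omega
    · rw [if_neg hi] at h0; omega
  have hCbox : ∀ k, k ∈ BoxS a (t+1) → Cc a (t+1) k ∈ BoxS a (t+1) := by
    intro k hk
    refine ⟨fun i h1 h2 => ?_, fun i hi => ?_⟩
    · have hb := hk.1 i h1 h2
      have h2a := ha i
      unfold Cc
      split_ifs <;> omega
    · have := hk.2 i hi
      unfold Cc
      split_ifs with h
      · omega
      · exact this
  have hCinvol : ∀ m, m ∈ BoxS a (t+1) → Cc a (t+1) (Cc a (t+1) m) = m := by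
    intro m hm
    funext i
    unfold Cc
    split_ifs with h
    · have := hm.1 i h.2.1 h.2.2
      omega
    · rfl
  obtain ⟨c1, hc1def⟩ : ∃ c1 : ℕ, c1 = if (t+1) % 2 = 1 then 1 else 0 := ⟨_, rfl⟩
  have hc1le : c1 ≤ 1 := by rw [hc1def]; split_ifs <;> omega
  have hψval : ∀ k ∈ K, ψ k = ((Ff a (t+1) (Cc a (t+1) k) + c1 : ℕ) : ℤ) := by
    intro k hk
    rw [hψPsi, Psi_eq a (t+1) k (hKsub hk).1, hc1def]
    split_ifs <;> push_cast <;> ring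
  have hbij := Ff_bijOn a ha (t+1)
  have hCclast : ∀ k : ℕ → ℕ, Cc a (t+1) k (t+1)
      = if (t+1) % 2 = 0 then a (t+1) - 1 - k (t+1) else k (t+1) := by
    intro k
    by_cases h0 : (t+1) % 2 = 0
    · rw [if_pos h0]; unfold Cc; rw [if_pos ⟨h0, by omega, le_rfl⟩]
    · rw [if_neg h0]; unfold Cc; rw [if_neg (fun hc => h0 hc.1)]
  have ha2 := ha (t+1)
  have hDd1 : d (t+1) = Dd a (t+1) := hdD (t+1)
  have hDdsucc : Dd a (t+1) = Dd a t * a (t+1) := Dd_succ a t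
  -- the main bijection
  have hmain : Set.BijOn ψ K I := by
    rw [hI]
    refine ⟨?_, ?_, ?_⟩
    · -- MapsTo
      intro k hk
      have hbox := hKsub hk
      have hCb := hCbox k hbox
      set m := Cc a (t+1) k with hm
      have hFlt : Ff a (t+1) m < Dd a (t+1) := hbij.mapsTo hCb
      have hFdec : Ff a (t+1) m = a (t+1) * Ff a t m + m (t+1) := Ff_succ a t m
      have hklast := ((hKiff k).mp hk).1 (t+1) (by omega) le_rfl
      rw [if_pos rfl] at hklast
      have hr : 1 ≤ m (t+1) + c1 ∧ m (t+1) + c1 ≤ a (t+1) - 1 := by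
        rw [hm, hCclast, hc1def]
        rcases Nat.even_or_odd (t+1) with he | hodd
        · have h0 : (t+1) % 2 = 0 := Nat.even_iff.mp he
          rw [if_pos h0, if_neg (show ¬ (t+1) % 2 = 1 by omega)]
          omega
        · have h0 : (t+1) % 2 = 1 := Nat.odd_iff.mp hodd
          rw [if_neg (show ¬ (t+1) % 2 = 0 by omega), if_pos h0]
          omega
      rw [hψval k hk]
      have hge1 : 1 ≤ Ff a (t+1) m + c1 := by omega
      refine ⟨by exact_mod_cast hge1, ?_, ?_⟩
      · rw [hDd1]
        exact_mod_cast (by omega : Ff a (t+1) m + c1 ≤ Dd a (t+1))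
      · rw [Int.natCast_dvd_natCast]
        intro hdvd
        have hdvd2 : a (t+1) ∣ m (t+1) + c1 := by
          have h1 : Ff a (t+1) m + c1 = a (t+1) * Ff a t m + (m (t+1) + c1) := by omega
          rw [h1] at hdvd
          exact (Nat.dvd_add_right ⟨Ff a t m, rfl⟩).mp hdvd
        have := Nat.le_of_dvd (by omega) hdvd2
        omega
    · -- InjOn
      intro k hk k' hk' he
      rw [hψval k hk, hψval k' hk'] at he
      have hF : Ff a (t+1) (Cc a (t+1) k) = Ff a (t+1) (Cc a (t+1) k') := by
        have := Int.ofNat_inj.mp he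
        omega
      have hCC := hbij.injOn (hCbox k (hKsub hk)) (hCbox k' (hKsub hk')) hF
      funext i
      have hci := congrFun hCC i
      unfold Cc at hci
      split_ifs at hci with h
      · have b1 := (hKsub hk).1 i h.2.1 h.2.2
        have b2 := (hKsub hk').1 i h.2.1 h.2.2
        omega
      · exact hci
    · -- SurjOn
      intro κ hκ
      obtain ⟨hκ1, hκ2, hκ3⟩ := hκ
      obtain ⟨κN, hκN⟩ : ∃ κN : ℕ, κN = κ.toNat := ⟨_, rfl⟩
      have hκcast : (κN : ℤ) = κ := by rw [hκN]; exact Int.toNat_of_nonneg (by omega)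
      have hκN1 : 1 ≤ κN := by omega
      have hκNle : κN ≤ Dd a (t+1) := by rw [hDd1] at hκ2; omega
      have hκNdvd : ¬ a (t+1) ∣ κN := by
        intro h
        exact hκ3 (by rw [← hκcast]; exact_mod_cast h)
      obtain ⟨N, hN⟩ : ∃ N : ℕ, N = κN - c1 := ⟨_, rfl⟩
      have hNlt : N < Dd a (t+1) := by
        rcases Nat.even_or_odd (t+1) with he | hodd
        · have h0 : (t+1) % 2 = 0 := Nat.even_iff.mp he
          have hc10 : c1 = 0 := by rw [hc1def, if_neg (by omega)]
          have : κN ≠ Dd a (t+1) := by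
            intro hcon
            exact hκNdvd (hcon ▸ ⟨Dd a t, by rw [hDdsucc]; ring⟩)
          omega
        · have h0 : (t+1) % 2 = 1 := Nat.odd_iff.mp hodd
          have hc11 : c1 = 1 := by rw [hc1def, if_pos h0]
          omega
      obtain ⟨m, hmbox, hFm⟩ := hbij.surjOn (Set.mem_Iio.mpr hNlt)
      have hFdec : Ff a (t+1) m = a (t+1) * Ff a t m + m (t+1) := Ff_succ a t m
      have hmlt : m (t+1) < a (t+1) := hmbox.1 (t+1) (by omega) le_rfl
      have hlast : ((t+1) % 2 = 1 → m (t+1) ≤ a (t+1) - 2) ∧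
          ((t+1) % 2 = 0 → 1 ≤ m (t+1)) := by
        constructor
        · intro h0
          have hc11 : c1 = 1 := by rw [hc1def, if_pos h0]
          by_contra hcon
          have hm1 : m (t+1) = a (t+1) - 1 := by omega
          have hexp : a (t+1) * (Ff a t m + 1) = a (t+1) * Ff a t m + a (t+1) := by ring
          exact hκNdvd ⟨Ff a t m + 1, by omega⟩
        · intro h0
          have hc10 : c1 = 0 := by rw [hc1def, if_neg (by omega)]
          by_contra hcon
          have hm0 : m (t+1) = 0 := by omega
          exact hκNdvd ⟨Ff a t m, by omega⟩
      refine ⟨Cc a (t+1) m, ?_, ?_⟩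
      · refine (hKiff _).mpr ⟨fun i h1 h2 => ?_, (hCbox m hmbox).2⟩
        have hbi := hmbox.1 i h1 h2
        have h2a := ha i
        split_ifs with hi
        · subst hi
          rw [hCclast]
          rcases Nat.even_or_odd (t+1) with he | hodd
          · have h0 : (t+1) % 2 = 0 := Nat.even_iff.mp he
            rw [if_pos h0]
            have := hlast.2 h0
            omega
          · have h0 : (t+1) % 2 = 1 := Nat.odd_iff.mp hodd
            rw [if_neg (by omega)]
            exact hlast.1 h0
        · unfold Cc
          split_ifs <;> omega
      · have hKmem : Cc a (t+1) m ∈ K := by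
          refine (hKiff _).mpr ⟨fun i h1 h2 => ?_, (hCbox m hmbox).2⟩
          have hbi := hmbox.1 i h1 h2
          have h2a := ha i
          split_ifs with hi
          · subst hi
            rw [hCclast]
            rcases Nat.even_or_odd (t+1) with he | hodd
            · have h0 : (t+1) % 2 = 0 := Nat.even_iff.mp he
              rw [if_pos h0]
              have := hlast.2 h0
              omega
            · have h0 : (t+1) % 2 = 1 := Nat.odd_iff.mp hodd
              rw [if_neg (by omega)]
              exact hlast.1 h0
          · unfold Cc
            split_ifs <;> omega
        rw [hψval _ hKmem, hCinvol m hmbox, hFm]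
        rw [← hκcast]
        congr 1
        omega
  have hcardI : Nat.card I = d (t+1) - d t := by
    rw [hI]
    set JN : Finset ℕ := (Finset.Icc 1 (Dd a (t+1))).filter (fun x => ¬ a (t+1) ∣ x)
      with hJN
    have hbijN : Set.BijOn (fun x : ℕ => (x : ℤ)) (↑JN : Set ℕ)
        {κ : ℤ | 1 ≤ κ ∧ κ ≤ (d (t+1) : ℤ) ∧ ¬ ((a (t+1) : ℤ) ∣ κ)} := by
      refine ⟨?_, ?_, ?_⟩
      · intro x hx
        simp only [Finset.coe_filter, Finset.mem_Icc, Set.mem_setOf_eq, hJN] at hx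
        refine ⟨?_, ?_, ?_⟩
        · show (1 : ℤ) ≤ (x : ℤ); exact_mod_cast hx.1.1
        · show (x : ℤ) ≤ ((d (t+1) : ℕ) : ℤ); rw [hDd1]; exact_mod_cast hx.1.2
        · show ¬ ((a (t+1) : ℤ) ∣ (x : ℤ))
          rw [Int.natCast_dvd_natCast]
          exact hx.2
      · intro x _ y _ h
        have hxy : (x : ℤ) = (y : ℤ) := h
        exact_mod_cast hxy
      · intro κ hκ
        obtain ⟨hκ1, hκ2, hκ3⟩ := hκ
        refine ⟨κ.toNat, ?_, by show ((κ.toNat : ℕ) : ℤ) = κ; omega⟩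
        simp only [Finset.coe_filter, Finset.mem_Icc, Set.mem_setOf_eq, hJN]
        rw [hDd1] at hκ2
        refine ⟨⟨by omega, by omega⟩, fun hdvd => hκ3 ?_⟩
        have hc : ((κ.toNat : ℕ) : ℤ) = κ := Int.toNat_of_nonneg (by omega)
        rw [← hc]
        exact_mod_cast hdvd
    rw [← Nat.card_congr (Set.BijOn.equiv _ hbijN), Nat.card_coe_set_eq,
      Set.ncard_coe_finset]
    have hsplit := Finset.card_filter_add_card_filter_not
      (s := Finset.Icc 1 (Dd a (t+1))) (p := fun x => a (t+1) ∣ x)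
    have hdvdcard : ((Finset.Icc 1 (Dd a (t+1))).filter (fun x => a (t+1) ∣ x)).card
        = Dd a t := by
      rw [hIoc, Nat.Ioc_filter_dvd_card_eq_div, hDdsucc,
        Nat.mul_div_cancel _ (by have := ha (t+1); omega)]
    have hicard : (Finset.Icc 1 (Dd a (t+1))).card = Dd a (t+1) := by
      rw [Nat.card_Icc]; omega
    have hgoal : JN.card = Dd a (t+1) - Dd a t := by
      rw [hJN]
      omega
    rw [hgoal, hDd1, hdD t]
  have hcardK : Nat.card K = d (t+1) - d t := by
    rw [Nat.card_congr (Set.BijOn.equiv ψ hmain), hcardI]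
  refine ⟨hmain, by simpa using hcardK, by simpa using hcardI⟩
end

section
/- For k in the domain of ψ and each i = 1,...,n, the rational weight ω_{k,i} (defined via (k+1)E^{-T}) equals the fractional part ω_{ψ(k),i} := frac((-1)^{i-1} (d_{i-1}/d_n) ψ(k)). -/
/-- Compatibility of the two definitions of weights: the rational weight
ω_{k,i} given by (k+1)E^{-T} equals the fractional part
frac((-1)^{i-1} (d_{i-1}/d_n) ψ(k)). -/
theorem chain_weights_eq_fract_of_psi (n : ℕ) (hn : 1 ≤ n) (a : ℕ → ℕ)
    (ha : ∀ i, 2 ≤ a i)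
    (d : ℕ → ℕ) (hd : ∀ i, d i = ∏ j ∈ Finset.Icc 1 i, a j)
    (E : Matrix (Fin n) (Fin n) ℚ)
    (hE : ∀ i j, E i j = (a (i.1 + 1) : ℚ) * (if i = j then 1 else 0) +
      (if i.1 + 1 = j.1 then 1 else 0))
    (k : Fin n → ℕ)
    (hk : ∀ i : Fin n, k i ≤ (if i.1 + 1 = n then a n - 2 else a (i.1 + 1) - 1))
    (ω : Fin n → ℚ)
    (hω : ω = Matrix.vecMul (fun i => (k i : ℚ) + 1) (E⁻¹).transpose)
    (ψ : ℤ)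
    (hψ : ψ = ∑ l : Fin n,
      (-1 : ℤ) ^ l.1 * ((d n : ℤ) / (d (l.1 + 1) : ℤ)) * ((k l : ℤ) + 1)) :
    ∀ i : Fin n,
      ω i = Int.fract ((-1 : ℚ) ^ i.1 * ((d i.1 : ℚ) / (d n : ℚ)) * (ψ : ℚ)) := by
  -- basic positivity / divisibility facts about d
  have hdpos : ∀ j, 0 < d j := by
    intro j; rw [hd]
    exact Finset.prod_pos fun x _ => lt_of_lt_of_le two_pos (ha x)
  have hdQ : ∀ j, (0:ℚ) < (d j : ℚ) := fun j => by exact_mod_cast hdpos j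
  have hdvd : ∀ p q, p ≤ q → d p ∣ d q := by
    intro p q hpq; rw [hd, hd]
    exact Finset.prod_dvd_prod_of_subset _ _ _ (Finset.Icc_subset_Icc_right hpq)
  have hdsucc : ∀ j, d (j+1) = d j * a (j+1) := by
    intro j
    rw [hd, hd, Finset.prod_Icc_succ_top (Nat.le_add_left 1 j)]
  -- the extended coefficient function
  set K : ℕ → ℚ := fun l => if h : l < n then (k ⟨l, h⟩ : ℚ) + 1 else 0 with hK
  -- the explicit solution of the linear system
  set S : ℕ → ℚ := fun p => ∑ l ∈ Finset.Ico p n,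
      (-1:ℚ)^(l+p) * K l * ((d p : ℚ) / (d (l+1) : ℚ)) with hS
  have hSn : S n = 0 := by rw [hS]; simp
  -- bounds on K
  have hK1 : ∀ l (h : l < n), 1 ≤ K l := by
    intro l h; rw [hK]; simp only [h, dif_pos]
    have : (0:ℚ) ≤ (k ⟨l, h⟩ : ℚ) := Nat.cast_nonneg _
    linarith
  have hKa : ∀ l (h : l < n), K l ≤ (a (l+1) : ℚ) := by
    intro l h
    have hkl := hk ⟨l, h⟩
    simp only [Fin.val_mk] at hkl
    have : k ⟨l, h⟩ + 1 ≤ a (l+1) := by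
      by_cases hc : l + 1 = n
      · rw [if_pos hc] at hkl
        rw [hc]
        have := ha n
        omega
      · rw [if_neg hc] at hkl
        have := ha (l+1)
        omega
    rw [hK]; simp only [h, dif_pos]
    exact_mod_cast this
  have hKan : ∀ l (h : l < n), l + 1 = n → K l ≤ (a (l+1) : ℚ) - 1 := by
    intro l h hc
    have hkl := hk ⟨l, h⟩
    simp only [Fin.val_mk] at hkl
    rw [if_pos hc] at hkl
    have h2 : k ⟨l, h⟩ + 1 ≤ a (l+1) - 1 := by
      have := ha n
      rw [hc]; omega
    have h3 : ((k ⟨l, h⟩ : ℚ) + 1) ≤ ((a (l+1) - 1 : ℕ) : ℚ) := by exact_mod_cast h2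
    rw [hK]; simp only [h, dif_pos]
    refine h3.trans ?_
    have := ha (l+1)
    rw [Nat.cast_sub (by omega : 1 ≤ a (l+1))]
    norm_num
  -- the recurrence
  have hrec : ∀ j, j < n → (a (j+1) : ℚ) * S j + S (j+1) = K j := by
    intro j hj
    have h1 : (a (j+1) : ℚ) * S j
        = ∑ l ∈ Finset.Ico j n, (-1:ℚ)^(l+j) * K l * ((d (j+1) : ℚ) / (d (l+1) : ℚ)) := by
      rw [hS, Finset.mul_sum]
      refine Finset.sum_congr rfl fun l _ => ?_
      rw [hdsucc j]
      push_cast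
      ring
    rw [h1, Finset.sum_eq_sum_Ico_succ_bot hj]
    have h2 : (-1:ℚ)^(j+j) * K j * ((d (j+1):ℚ)/(d (j+1):ℚ)) = K j := by
      rw [div_self (ne_of_gt (hdQ (j+1))), ← two_mul, pow_mul]
      norm_num
    have h3 : ∑ l ∈ Finset.Ico (j+1) n, (-1:ℚ)^(l+j) * K l * ((d (j+1):ℚ)/(d (l+1):ℚ))
        = - S (j+1) := by
      rw [hS, ← Finset.sum_neg_distrib]
      refine Finset.sum_congr rfl fun l _ => ?_
      have : (-1:ℚ)^(l+(j+1)) = (-1:ℚ)^(l+j) * (-1) := by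
        rw [← Nat.add_assoc, pow_succ]
      rw [this]
      ring
    rw [h2, h3]
    ring
  -- bounds on S
  have hbound : ∀ m j, j + m = n → (m = 0 → S j = 0) ∧ (0 < m → 0 < S j ∧ S j < 1) := by
    intro m
    induction m with
    | zero =>
      intro j hj
      refine ⟨fun _ => ?_, fun h => absurd h (lt_irrefl 0)⟩
      have : j = n := by omega
      rw [this, hSn]
    | succ m ih =>
      intro j hj
      have hjn : j < n := by omega
      have hr := hrec j hjn
      have haQ : (2:ℚ) ≤ (a (j+1) : ℚ) := by exact_mod_cast ha (j+1)
      have hK1' := hK1 j hjn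
      have hKa' := hKa j hjn
      refine ⟨fun h => absurd h (Nat.succ_ne_zero m), fun _ => ?_⟩
      rcases Nat.eq_zero_or_pos m with h0 | hpos
      · have hS1 : S (j+1) = 0 := (ih (j+1) (by omega)).1 h0
        have hKn' : K j ≤ (a (j+1) : ℚ) - 1 := hKan j hjn (by omega)
        rw [hS1, add_zero] at hr
        constructor
        · nlinarith
        · nlinarith
      · obtain ⟨hp1, hp2⟩ := (ih (j+1) (by omega)).2 hpos
        constructor
        · nlinarith
        · nlinarith
  -- ω equals S
  have hSE : ∀ p : Fin n, Matrix.vecMul (fun q : Fin n => S q.1) E.transpose p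
      = (k p : ℚ) + 1 := by
    intro p
    have hexp : Matrix.vecMul (fun q : Fin n => S q.1) E.transpose p
        = ∑ q : Fin n, S q.1 * E p q := by
      simp [Matrix.vecMul, dotProduct, Matrix.transpose_apply]
    rw [hexp]
    have hterm : ∀ q : Fin n, S q.1 * E p q
        = (if p = q then (a (p.1+1) : ℚ) * S q.1 else 0)
          + (if p.1 + 1 = q.1 then S q.1 else 0) := by
      intro q
      rw [hE p q]
      by_cases h1 : p = q <;> by_cases h2 : p.1 + 1 = q.1 <;>
        simp [h1, h2] <;> ring
    rw [Finset.sum_congr rfl fun q _ => hterm q, Finset.sum_add_distrib,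
      Finset.sum_ite_eq Finset.univ p (fun q : Fin n => (a (p.1+1) : ℚ) * S q.1)]
    simp only [Finset.mem_univ, if_pos]
    have h4 : ∑ q : Fin n, (if p.1 + 1 = q.1 then S q.1 else 0) = S (p.1 + 1) := by
      by_cases hc : p.1 + 1 < n
      · rw [Finset.sum_eq_single (⟨p.1+1, hc⟩ : Fin n)]
        · simp
        · intro b _ hb
          rw [if_neg]
          intro hcontra
          exact hb (Fin.ext hcontra.symm)
        · intro h; exact absurd (Finset.mem_univ _) h
      · have : p.1 + 1 = n := by omega
        rw [this, hSn, Finset.sum_eq_zero]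
        intro b _
        rw [if_neg]
        omega
    rw [h4]
    have h5 := hrec p.1 p.2
    have h6 : K p.1 = (k p : ℚ) + 1 := by
      rw [hK]; simp only [p.2, dif_pos]
    rw [← h6, ← h5]
  have hEdet : IsUnit E.det := by
    have hBT : E.BlockTriangular id := by
      intro p q hpq
      rw [hE]
      have h1 : p ≠ q := by
        intro h; rw [h] at hpq; exact lt_irrefl _ hpq
      have h2 : p.1 + 1 ≠ q.1 := by
        have : q < p := hpq
        have := Fin.lt_iff_val_lt_val.mp this
        omega
      simp [h1, h2]
    rw [Matrix.det_of_upperTriangular hBT]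
    rw [isUnit_iff_ne_zero, Finset.prod_ne_zero_iff]
    intro p _
    rw [hE]
    have h2 : ¬ (p.1 + 1 = p.1) := by omega
    have h3 : (a (p.1+1) : ℚ) ≠ 0 :=
      Nat.cast_ne_zero.mpr (by have := ha (p.1+1); omega)
    simp [h2, h3]
  have hωS : ∀ p : Fin n, ω p = S p.1 := by
    intro p
    have h1 : (fun q : Fin n => (k q : ℚ) + 1)
        = Matrix.vecMul (fun q : Fin n => S q.1) E.transpose :=
      funext fun q => (hSE q).symm
    rw [hω, h1, Matrix.vecMul_vecMul, ← Matrix.transpose_mul,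
      Matrix.nonsing_inv_mul E hEdet, Matrix.transpose_one, Matrix.vecMul_one]
  -- now the fractional part computation
  intro i
  set KZ : ℕ → ℤ := fun l => if h : l < n then (k ⟨l, h⟩ : ℤ) + 1 else 0 with hKZ
  have hKZK : ∀ l, ((KZ l : ℤ) : ℚ) = K l := by
    intro l
    rw [hKZ, hK]
    by_cases h : l < n <;> simp [h]
  have hψQ : (ψ : ℚ) = ∑ l ∈ Finset.range n,
      (-1:ℚ)^l * ((d n : ℚ) / (d (l+1) : ℚ)) * K l := by
    have hψ2 : ψ = ∑ l ∈ Finset.range n,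
        (-1:ℤ)^l * ((d n : ℤ) / (d (l+1) : ℤ)) * KZ l := by
      rw [hψ, ← Fin.sum_univ_eq_sum_range]
      refine Finset.sum_congr rfl fun l _ => ?_
      rw [hKZ]
      simp only [l.2, dif_pos, Fin.eta]
    rw [hψ2, Int.cast_sum]
    refine Finset.sum_congr rfl fun l hl => ?_
    have hl' : l + 1 ≤ n := Finset.mem_range.mp hl
    have hdvd' : ((d (l+1) : ℤ)) ∣ (d n : ℤ) := Int.natCast_dvd_natCast.mpr (hdvd _ _ hl')
    rw [Int.cast_mul, Int.cast_mul, Int.cast_pow, Int.cast_neg, Int.cast_one, hKZK,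
      Int.cast_div hdvd' (by exact_mod_cast ne_of_gt (hdQ (l+1))),
      Int.cast_natCast, Int.cast_natCast]
  set M : ℤ := ∑ l ∈ Finset.range i.1,
      (-1:ℤ)^(l+i.1) * KZ l * ((d i.1 / d (l+1) : ℕ) : ℤ) with hM
  have hMQ : (M : ℚ) = ∑ l ∈ Finset.range i.1,
      (-1:ℚ)^(l+i.1) * K l * ((d i.1 : ℚ) / (d (l+1) : ℚ)) := by
    rw [hM, Int.cast_sum]
    refine Finset.sum_congr rfl fun l hl => ?_
    have hl' : l + 1 ≤ i.1 := Finset.mem_range.mp hl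
    have hcast : ((d i.1 / d (l+1) : ℕ) : ℚ) = (d i.1 : ℚ) / (d (l+1) : ℚ) :=
      Nat.cast_div (hdvd _ _ hl') (ne_of_gt (hdQ (l+1)))
    rw [Int.cast_mul, Int.cast_mul, Int.cast_pow, Int.cast_neg, Int.cast_one, hKZK,
      Int.cast_natCast, hcast]
  have hx : (-1 : ℚ) ^ i.1 * ((d i.1 : ℚ) / (d n : ℚ)) * (ψ : ℚ) = (M : ℚ) + S i.1 := by
    rw [hψQ, Finset.mul_sum]
    have hsplit : ∑ l ∈ Finset.range n,
        (-1 : ℚ) ^ i.1 * ((d i.1 : ℚ) / (d n : ℚ))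
          * ((-1:ℚ)^l * ((d n : ℚ) / (d (l+1) : ℚ)) * K l)
        = ∑ l ∈ Finset.range n, (-1:ℚ)^(l+i.1) * K l * ((d i.1 : ℚ) / (d (l+1) : ℚ)) := by
      refine Finset.sum_congr rfl fun l _ => ?_
      rw [pow_add]
      have h0 : (d n : ℚ) ≠ 0 := ne_of_gt (hdQ n)
      have key : (d i.1 : ℚ)/(d n : ℚ) * ((d n : ℚ)/(d (l+1) : ℚ))
          = (d i.1 : ℚ)/(d (l+1) : ℚ) := by
        rw [div_mul_div_comm, mul_comm ((d i.1 : ℚ)) ((d n : ℚ)),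
          mul_div_mul_left _ _ h0]
      linear_combination ((-1:ℚ)^i.1 * (-1:ℚ)^l * K l) * key
    rw [hsplit, Finset.range_eq_Ico,
      ← Finset.sum_Ico_consecutive _ (Nat.zero_le i.1) (le_of_lt i.2),
      ← Finset.range_eq_Ico, hMQ, hS]
  rw [hωS i, hx, Int.fract_intCast_add]
  have hb := (hbound (n - i.1) i.1 (by omega)).2 (by omega)
  rw [Int.fract_eq_self.mpr ⟨le_of_lt hb.1, hb.2⟩]
end

section
/- For a tuple k with 0 ≤ k_i ≤ a_i - 1 (i < n), 0 ≤ k_n ≤ a_n - 2, the integral over the positive orthant ∫_{(ℝ_{≥0})^n} e^{-f̃_n(x)} x_1^{k_1}···x_n^{k_n} dx_1···dx_n equals (1/d_n) ∏_{l=1}^n Γ(ω_{k,l}), where f̃_n(x) = x_1^{a_1} + x_1 x_2^{a_2} + ··· + x_{n-1} x_n^{a_n}. -/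
open MeasureTheory Real Set
open scoped ENNReal

noncomputable def chainH (c : ℝ) (t : ℝ) : ENNReal :=
  ENNReal.ofReal ((Set.Ioi (0:ℝ)).indicator (fun s => s ^ c) t)

lemma chainH_neg {c t : ℝ} (ht : t ≤ 0) : chainH c t = 0 := by
  rw [chainH, Set.indicator_of_notMem (by simpa using ht)]
  simp

lemma chainH_pos {c t : ℝ} (ht : 0 < t) : chainH c t = ENNReal.ofReal (t ^ c) := by
  simp [chainH, Set.indicator_of_mem, Set.mem_Ioi, ht]

lemma measurable_chainH (c : ℝ) : Measurable (chainH c) := by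
  apply ENNReal.measurable_ofReal.comp
  exact Measurable.indicator (measurable_id.pow_const c) measurableSet_Ioi

/-- single variable integral -/
lemma chain_key {p : ℕ} (hp : 2 ≤ p) {b c : ℝ} (hb : 0 < b) (hc : 0 < (c + 1) / p) :
    ∫⁻ t : ℝ, ENNReal.ofReal (Real.exp (-(b * t ^ p))) * chainH c t
      = ENNReal.ofReal (b ^ (-((c + 1) / p)) * ((1 / p) * Real.Gamma ((c + 1) / p))) := by
  have hp0 : (0:ℝ) < p := by positivity
  have hc1 : -1 < c := by
    have h := mul_pos hc hp0
    rw [div_mul_cancel₀ _ (ne_of_gt hp0)] at h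
    linarith
  have : ∀ t : ℝ, ENNReal.ofReal (Real.exp (-(b * t ^ p))) * chainH c t
      = (Set.Ioi (0:ℝ)).indicator (fun t => ENNReal.ofReal (t ^ c * Real.exp (-b * t ^ (p:ℝ)))) t := by
    intro t
    rcases le_or_gt t 0 with ht | ht
    · rw [chainH_neg ht, mul_zero, Set.indicator_of_notMem (by simpa using ht)]
    · rw [chainH_pos ht, Set.indicator_of_mem (by simpa using ht), ← ENNReal.ofReal_mul (by positivity),
        Real.rpow_natCast, mul_comm, neg_mul]
  rw [lintegral_congr this, lintegral_indicator measurableSet_Ioi _,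
    ← ofReal_integral_eq_lintegral_ofReal]
  · rw [integral_rpow_mul_exp_neg_mul_rpow hp0 hc1 hb]
    rw [neg_div, mul_assoc]
  · exact integrableOn_rpow_mul_exp_neg_mul_rpow hc1 (by exact_mod_cast Nat.one_le_of_lt hp) hb
  · filter_upwards [self_mem_ae_restrict measurableSet_Ioi] with t ht
    have : (0:ℝ) < t := ht
    positivity

noncomputable def chainF (a : ℕ → ℕ) (n : ℕ) (x : Fin (n+1) → ℝ) : ℝ :=
  x ⟨0, Nat.succ_pos n⟩ ^ a 1 +
    ∑ i : Fin (n+1), if i.1 = 0 then 0 else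
      x ⟨i.1 - 1, Nat.lt_of_le_of_lt (Nat.sub_le _ _) i.isLt⟩ * x i ^ a (i.1 + 1)

lemma chainF_zero (a : ℕ → ℕ) (x : Fin 1 → ℝ) : chainF a 0 x = x 0 ^ a 1 := by
  simp [chainF]

lemma chainF_snoc (a : ℕ → ℕ) (n : ℕ) (y : Fin (n+1) → ℝ) (t : ℝ) :
    chainF a (n+1) (Fin.snoc y t) = chainF a n y + y (Fin.last n) * t ^ a (n + 2) := by
  unfold chainF
  rw [Fin.sum_univ_castSucc]
  have h0 : (Fin.snoc y t : Fin (n+2) → ℝ) ⟨0, Nat.succ_pos (n+1)⟩ = y ⟨0, Nat.succ_pos n⟩ := by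
    have : (⟨0, Nat.succ_pos (n+1)⟩ : Fin (n+2)) = Fin.castSucc ⟨0, Nat.succ_pos n⟩ := rfl
    rw [this, Fin.snoc_castSucc]
  rw [h0]
  have hsum : ∀ i : Fin (n+1),
      (if (Fin.castSucc i).1 = 0 then 0 else
        (Fin.snoc y t : Fin (n+2) → ℝ) ⟨(Fin.castSucc i).1 - 1, Nat.lt_of_le_of_lt (Nat.sub_le _ _) (Fin.castSucc i).isLt⟩
          * (Fin.snoc y t : Fin (n+2) → ℝ) (Fin.castSucc i) ^ a ((Fin.castSucc i).1 + 1))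
      = (if i.1 = 0 then 0 else
          y ⟨i.1 - 1, Nat.lt_of_le_of_lt (Nat.sub_le _ _) i.isLt⟩ * y i ^ a (i.1 + 1)) := by
    intro i
    rcases Nat.eq_zero_or_pos i.1 with h | h
    · simp [h, Fin.castSucc]
    · rw [if_neg (by show ¬ (i.1 = 0); omega), if_neg (by omega)]
      have e1 : (⟨(Fin.castSucc i).1 - 1, Nat.lt_of_le_of_lt (Nat.sub_le _ _) (Fin.castSucc i).isLt⟩ : Fin (n+2))
          = Fin.castSucc ⟨i.1 - 1, Nat.lt_of_le_of_lt (Nat.sub_le _ _) i.isLt⟩ := rfl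
      rw [e1, Fin.snoc_castSucc, Fin.snoc_castSucc]
      rfl
  rw [Finset.sum_congr rfl (fun i _ => hsum i)]
  have hlast : (if (Fin.last (n+1)).1 = 0 then (0:ℝ) else
      (Fin.snoc y t : Fin (n+2) → ℝ) ⟨(Fin.last (n+1)).1 - 1, Nat.lt_of_le_of_lt (Nat.sub_le _ _) (Fin.last (n+1)).isLt⟩
        * (Fin.snoc y t : Fin (n+2) → ℝ) (Fin.last (n+1)) ^ a ((Fin.last (n+1)).1 + 1))
      = y (Fin.last n) * t ^ a (n+2) := by
    rw [if_neg (by simp [Fin.last])]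
    have e1 : (⟨(Fin.last (n+1)).1 - 1, Nat.lt_of_le_of_lt (Nat.sub_le _ _) (Fin.last (n+1)).isLt⟩ : Fin (n+2))
        = Fin.castSucc (Fin.last n) := rfl
    rw [e1, Fin.snoc_castSucc, Fin.snoc_last]
    rfl
  rw [hlast]
  ring

lemma measurable_chainF (a : ℕ → ℕ) (n : ℕ) : Measurable (chainF a n) := by
  unfold chainF
  apply Measurable.add
  · fun_prop
  · apply Finset.measurable_sum
    intro i _
    rcases Nat.eq_zero_or_pos i.1 with h | h
    · simp [h]
    · have h' : ¬ (i.1 = 0) := by omega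
      simp only [h', if_false]
      fun_prop

lemma null_coord {n : ℕ} (i : Fin n) : volume {y : Fin n → ℝ | y i = 0} = 0 := by
  have : {y : Fin n → ℝ | y i = 0} =
      Set.pi Set.univ (fun j => if j = i then ({0} : Set ℝ) else Set.univ) := by
    ext y
    simp only [Set.mem_setOf_eq, Set.mem_pi, Set.mem_univ, forall_true_left]
    constructor
    · intro h j; by_cases hj : j = i <;> simp [hj, h]
    · intro h; have := h i; simpa using this
  rw [this, volume_pi_pi]
  apply Finset.prod_eq_zero (Finset.mem_univ i)
  simp

lemma ae_ne_zero {n : ℕ} : ∀ᵐ y : Fin n → ℝ, ∀ i, y i ≠ 0 := by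
  rw [ae_iff]
  have : {y : Fin n → ℝ | ¬ ∀ i, y i ≠ 0} ⊆ ⋃ i, {y : Fin n → ℝ | y i = 0} := by
    intro y hy
    simp only [Set.mem_setOf_eq, not_forall, not_not] at hy
    obtain ⟨i, hi⟩ := hy
    exact Set.mem_iUnion.2 ⟨i, hi⟩
  refine measure_mono_null this ?_
  exact measure_iUnion_null (fun i => null_coord i)

lemma chain_aux (a : ℕ → ℕ) (ha : ∀ i, 2 ≤ a i) :
    ∀ n (c ω : ℕ → ℝ),
    (ω n = (c n + 1) / a (n+1)) →
    (∀ i, i < n → ω i = (c i + 1 - ω (i+1)) / a (i+1)) →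
    (∀ i, i ≤ n → 0 < ω i) →
    ∫⁻ x : Fin (n+1) → ℝ,
        ENNReal.ofReal (Real.exp (-(chainF a n x))) * ∏ i : Fin (n+1), chainH (c i.1) (x i)
      = ∏ i : Fin (n+1), ENNReal.ofReal ((1 / a (i.1+1)) * Real.Gamma (ω i.1)) := by
  intro n
  induction n with
  | zero =>
    intro c ω h_top h_rec h_pos
    have e := MeasurableEquiv.funUnique (Fin 1) ℝ
    have hkey := chain_key (ha 1) (one_pos) (show 0 < (c 0 + 1) / (a 1 : ℝ) by
      rw [← h_top]; exact h_pos 0 le_rfl)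
    calc ∫⁻ x : Fin 1 → ℝ,
          ENNReal.ofReal (Real.exp (-(chainF a 0 x))) * ∏ i : Fin 1, chainH (c i.1) (x i)
        = ∫⁻ x : Fin 1 → ℝ,
            (fun t : ℝ => ENNReal.ofReal (Real.exp (-(1 * t ^ a 1))) * chainH (c 0) t)
              ((MeasurableEquiv.funUnique (Fin 1) ℝ) x) := by
          apply lintegral_congr; intro x
          simp only [MeasurableEquiv.funUnique_apply, chainF_zero, Fin.prod_univ_one, one_mul]
          rfl
      _ = ∫⁻ t : ℝ, ENNReal.ofReal (Real.exp (-(1 * t ^ a 1))) * chainH (c 0) t := by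
          exact MeasurePreserving.lintegral_comp_emb (volume_preserving_funUnique (Fin 1) ℝ)
            (MeasurableEquiv.measurableEmbedding _)
            (fun t : ℝ => ENNReal.ofReal (Real.exp (-(1 * t ^ a 1))) * chainH (c 0) t)
      _ = ∏ i : Fin 1, ENNReal.ofReal ((1 / a (i.1+1)) * Real.Gamma (ω i.1)) := by
          rw [hkey, Fin.prod_univ_one]
          simp [Real.one_rpow, h_top]
  | succ n IH =>
    intro c ω h_top h_rec h_pos
    have hp2 : 2 ≤ a (n+2) := ha (n+2)
    set F : (Fin (n+2) → ℝ) → ℝ≥0∞ := fun x =>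
      ENNReal.ofReal (Real.exp (-(chainF a (n+1) x))) * ∏ i : Fin (n+2), chainH (c i.1) (x i)
      with hF
    have hFmeas : Measurable F := by
      apply Measurable.mul
      · exact ENNReal.measurable_ofReal.comp ((measurable_chainF a (n+1)).neg.exp)
      · exact Finset.measurable_prod _ (fun i _ =>
          (measurable_chainH (c i.1)).comp (measurable_pi_apply i))
    set e := MeasurableEquiv.piFinSuccAbove (fun _ : Fin (n+2) => ℝ) (Fin.last (n+1)) with he
    have hmp := measurePreserving_piFinSuccAbove
      (fun _ : Fin (n+2) => (volume : Measure ℝ)) (Fin.last (n+1))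
    have hsymm : ∀ (t : ℝ) (y : Fin (n+1) → ℝ), e.symm (t, y) = Fin.snoc y t := by
      intro t y
      simp only [he, MeasurableEquiv.piFinSuccAbove_symm_apply, Fin.insertNthEquiv,
        Equiv.coe_fn_mk, Fin.insertNth_last']
    -- split into init and last
    set P : (Fin (n+1) → ℝ) → ℝ≥0∞ := fun y =>
      ENNReal.ofReal (Real.exp (-(chainF a n y))) * ∏ i : Fin (n+1), chainH (c i.1) (y i)
      with hP
    set Q : (Fin (n+1) → ℝ) → ℝ → ℝ≥0∞ := fun y t =>
      ENNReal.ofReal (Real.exp (-(y (Fin.last n) * t ^ a (n+2)))) * chainH (c (n+1)) t with hQ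
    have hsplit : ∀ (y : Fin (n+1) → ℝ) (t : ℝ), F (Fin.snoc y t) = P y * Q y t := by
      intro y t
      rw [hF, hP, hQ]
      simp only
      rw [chainF_snoc, neg_add, Real.exp_add,
        ENNReal.ofReal_mul (le_of_lt (Real.exp_pos _)), Fin.prod_univ_castSucc]
      have h1 : ∀ j : Fin (n+1),
          chainH (c (Fin.castSucc j).1) ((Fin.snoc y t : Fin (n+2) → ℝ) (Fin.castSucc j))
          = chainH (c j.1) (y j) := by
        intro j; rw [Fin.snoc_castSucc]; rfl
      rw [Finset.prod_congr rfl (fun j _ => h1 j), Fin.snoc_last]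
      show _ * _ * (_ * chainH (c (n+1)) t) = _
      ring
    have hPne : ∀ y, P y ≠ ⊤ := by
      intro y
      apply ENNReal.mul_ne_top ENNReal.ofReal_ne_top
      exact WithTop.prod_ne_top (fun i _ => ENNReal.ofReal_ne_top)
    have hQmeas : ∀ y, Measurable (Q y) := by
      intro y
      exact Measurable.mul (by fun_prop) (measurable_chainH _)
    -- new exponents
    set c' : ℕ → ℝ := fun i => if i = n then c n - ω (n+1) else c i with hc'
    set P' : (Fin (n+1) → ℝ) → ℝ≥0∞ := fun y =>
      ENNReal.ofReal (Real.exp (-(chainF a n y))) * ∏ i : Fin (n+1), chainH (c' i.1) (y i)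
      with hP'
    have hP'meas : Measurable P' := by
      apply Measurable.mul
      · exact ENNReal.measurable_ofReal.comp ((measurable_chainF a n).neg.exp)
      · exact Finset.measurable_prod _ (fun i _ =>
          (measurable_chainH (c' i.1)).comp (measurable_pi_apply i))
    have hω1 : ω (n+1) = (c (n+1) + 1) / (a (n+2) : ℝ) := h_top
    have hωpos : 0 < ω (n+1) := h_pos (n+1) le_rfl
    set K : ℝ≥0∞ := ENNReal.ofReal ((1 / (a (n+2) : ℝ)) * Real.Gamma (ω (n+1))) with hK
    have hae : ∀ᵐ y : Fin (n+1) → ℝ, (∫⁻ t, F (Fin.snoc y t)) = P' y * K := by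
      filter_upwards [ae_ne_zero] with y hy
      have h1 : (∫⁻ t, F (Fin.snoc y t)) = P y * ∫⁻ t, Q y t := by
        simp_rw [hsplit]
        exact lintegral_const_mul' _ _ (hPne y)
      by_cases hpos : ∀ i, 0 < y i
      · have hb : 0 < y (Fin.last n) := hpos _
        have hkey := chain_key hp2 hb (by rw [← hω1]; exact hωpos)
        rw [h1, hQ]
        simp only
        rw [hkey, ← hω1, ENNReal.ofReal_mul (by positivity)]
        -- P y * (ofReal (b ^ (-ω(n+1))) * K) = P' y * K
        simp only [hP, hP']
        rw [Fin.prod_univ_castSucc, Fin.prod_univ_castSucc]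
        have hsame : ∀ j : Fin n, chainH (c' (Fin.castSucc j).1) (y (Fin.castSucc j))
            = chainH (c (Fin.castSucc j).1) (y (Fin.castSucc j)) := by
          intro j
          have hne : c' (Fin.castSucc j).1 = c (Fin.castSucc j).1 := by
            simp only [hc', Fin.coe_castSucc]
            rw [if_neg (by omega)]
          rw [hne]
        rw [Finset.prod_congr rfl (fun j _ => hsame j)]
        have hmerge : chainH (c (Fin.last n).1) (y (Fin.last n))
              * ENNReal.ofReal (y (Fin.last n) ^ (-ω (n+1)))
            = chainH (c' (Fin.last n).1) (y (Fin.last n)) := by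
          rw [chainH_pos hb, chainH_pos hb, ← ENNReal.ofReal_mul (by positivity),
            ← Real.rpow_add hb]
          congr 2
          simp only [hc', Fin.val_last, if_pos]
          ring
        rw [← hmerge, hK]
        ring
      · push_neg at hpos
        obtain ⟨i, hi⟩ := hpos
        have hneg : y i ≤ 0 := hi
        have hz : chainH (c i.1) (y i) = 0 := chainH_neg hneg
        have hz' : chainH (c' i.1) (y i) = 0 := chainH_neg hneg
        have hP0 : P y = 0 := by
          simp only [hP]
          rw [Finset.prod_eq_zero (Finset.mem_univ i) hz, mul_zero]
        have hP'0 : P' y = 0 := by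
          simp only [hP']
          rw [Finset.prod_eq_zero (Finset.mem_univ i) hz', mul_zero]
        rw [h1, hP0, hP'0, zero_mul, zero_mul]
    -- main chain
    calc ∫⁻ x : Fin (n+2) → ℝ, F x
        = ∫⁻ x : Fin (n+2) → ℝ, (F ∘ e.symm) (e x) := by
          apply lintegral_congr; intro x; simp
      _ = ∫⁻ z : ℝ × (Fin (n+1) → ℝ), (F ∘ e.symm) z
            ∂((volume : Measure ℝ).prod (Measure.pi fun _ : Fin (n+1) => volume)) := by
          rw [MeasureTheory.volume_pi]
          exact hmp.lintegral_comp_emb (MeasurableEquiv.measurableEmbedding _) _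
      _ = ∫⁻ y : Fin (n+1) → ℝ, (∫⁻ t : ℝ, F (Fin.snoc y t))
            ∂(Measure.pi fun _ : Fin (n+1) => volume) := by
          rw [lintegral_prod_symm _ ((hFmeas.comp e.symm.measurable)).aemeasurable]
          apply lintegral_congr; intro y
          apply lintegral_congr; intro t
          simp [hsymm]
      _ = ∫⁻ y : Fin (n+1) → ℝ, P' y * K := by
          rw [← MeasureTheory.volume_pi]
          exact lintegral_congr_ae hae
      _ = (∫⁻ y : Fin (n+1) → ℝ, P' y) * K := lintegral_mul_const _ hP'meas
      _ = (∏ i : Fin (n+1), ENNReal.ofReal ((1 / a (i.1+1)) * Real.Gamma (ω i.1))) * K := by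
          congr 1
          apply IH c' ω
          · have hcn : c' n = c n - ω (n+1) := by simp [hc']
            rw [hcn, h_rec n (lt_add_one n)]
            ring
          · intro i hi
            rw [hc']; simp only
            rw [if_neg (by omega)]
            exact h_rec i (by omega)
          · intro i hi
            exact h_pos i (by omega)
      _ = ∏ i : Fin (n+2), ENNReal.ofReal ((1 / a (i.1+1)) * Real.Gamma (ω i.1)) := by
          rw [hK, Fin.prod_univ_castSucc
            (f := fun i : Fin (n+2) => ENNReal.ofReal ((1 / (a (i.1+1) : ℝ)) * Real.Gamma (ω i.1)))]
          simp only [Fin.coe_castSucc, Fin.val_last]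

/-- The oscillatory-type integral over the positive orthant:
∫_{(ℝ≥0)^n} e^{-f̃_n(x)} x^k dx = (1/d_n) ∏_l Γ(ω_{k,l}), where
f̃_n(x) = x_1^{a_1} + x_1 x_2^{a_2} + ··· + x_{n-1} x_n^{a_n}. -/
theorem chain_gamma_integral (n : ℕ) (hn : 1 ≤ n) (a : ℕ → ℕ) (ha : ∀ i, 2 ≤ a i)
    (d : ℕ → ℕ) (hd : ∀ i, d i = ∏ j ∈ Finset.Icc 1 i, a j)
    (E : Matrix (Fin n) (Fin n) ℝ)
    (hE : ∀ i j, E i j = (a (i.1 + 1) : ℝ) * (if i = j then 1 else 0) +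
      (if i.1 + 1 = j.1 then 1 else 0))
    (k : Fin n → ℕ)
    (hk : ∀ i : Fin n, k i ≤ (if i.1 + 1 = n then a n - 2 else a (i.1 + 1) - 1))
    (ω : Fin n → ℝ)
    (hω : ω = Matrix.vecMul (fun i => (k i : ℝ) + 1) (E⁻¹).transpose)
    (f : (Fin n → ℝ) → ℝ)
    (hf : ∀ x, f x = x ⟨0, by omega⟩ ^ a 1 +
      ∑ i : Fin n, if i.1 = 0 then 0 else
        x ⟨i.1 - 1, Nat.lt_of_le_of_lt (Nat.sub_le _ _) i.isLt⟩ * x i ^ a (i.1 + 1)) :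
    ∫ x in Set.univ.pi (fun _ : Fin n => Set.Ici (0 : ℝ)),
        Real.exp (-(f x)) * ∏ i, x i ^ k i
      = (1 / (d n : ℝ)) * ∏ i : Fin n, Real.Gamma (ω i) := by
  -- Step 1: matrix relation → recursion
  have hdet : IsUnit E.det := by
    have htri : E.BlockTriangular id := by
      intro i j hij
      simp only [id] at hij
      have h1 : ¬ (i = j) := by exact fun h => absurd h (Fin.ne_of_gt hij)
      have h2 : ¬ (i.1 + 1 = j.1) := by
        have := (Fin.lt_iff_val_lt_val).1 hij
        omega
      rw [hE i j, if_neg h1, if_neg h2, mul_zero, add_zero]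
    rw [Matrix.det_of_upperTriangular htri, isUnit_iff_ne_zero]
    rw [Finset.prod_ne_zero_iff]
    intro i _
    have h2 : ¬ (i.1 + 1 = i.1) := by omega
    rw [hE i i, if_pos rfl, mul_one, if_neg h2, add_zero]
    have := ha (i.1+1)
    positivity
  have hvE : Matrix.vecMul ω E.transpose = (fun i => (k i : ℝ) + 1) := by
    rw [hω, Matrix.vecMul_vecMul, Matrix.transpose_nonsing_inv,
      Matrix.nonsing_inv_mul _ (by rwa [Matrix.det_transpose]), Matrix.vecMul_one]
  have hrel : ∀ i : Fin n, (a (i.1+1) : ℝ) * ω i +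
      (if h : i.1 + 1 < n then ω ⟨i.1+1, h⟩ else 0) = (k i : ℝ) + 1 := by
    intro i
    have h := congrFun hvE i
    simp only [Matrix.vecMul, dotProduct, Matrix.transpose_apply] at h
    have hterm : ∀ j : Fin n, ω j * E i j
        = (if i = j then (a (i.1+1) : ℝ) * ω j else 0) + (if i.1 + 1 = j.1 then ω j else 0) := by
      intro j
      rw [hE i j]
      split_ifs <;> ring
    have hsum : ∑ j : Fin n, ω j * E i j = (a (i.1+1) : ℝ) * ω i +
        (if h : i.1 + 1 < n then ω ⟨i.1+1, h⟩ else 0) := by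
      rw [Finset.sum_congr rfl (fun j _ => hterm j), Finset.sum_add_distrib]
      congr 1
      · rw [Finset.sum_ite_eq (Finset.univ) i (fun j => (a (i.1+1) : ℝ) * ω j)]
        simp
      · by_cases h : i.1 + 1 < n
        · rw [dif_pos h]
          rw [Finset.sum_eq_single (⟨i.1+1, h⟩ : Fin n)]
          · rw [if_pos rfl]
          · intro j _ hj
            rw [if_neg (fun hc => hj (Fin.ext hc.symm))]
          · intro hc
            exact absurd (Finset.mem_univ _) hc
        · rw [dif_neg h]
          apply Finset.sum_eq_zero
          intro j _
          rw [if_neg (by have := j.isLt; omega)]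
    rw [← h, hsum]
  -- Step 2: bounds on ω
  have hbound : ∀ m : ℕ, ∀ i : Fin n, i.1 + 1 + m = n → 0 < ω i ∧ ω i < 1 := by
    intro m
    induction m with
    | zero =>
      intro i hi
      have h1 := hrel i
      rw [dif_neg (by omega)] at h1
      have hki : (k i : ℝ) ≤ (a n : ℝ) - 2 := by
        have hk' := hk i
        rw [if_pos (by omega)] at hk'
        have h2 : (k i) + 2 ≤ a n := by have := ha n; omega
        have := (Nat.cast_le (α := ℝ)).2 h2
        push_cast at this
        linarith
      have han : (a (i.1+1) : ℝ) = (a n : ℝ) := by rw [show i.1 + 1 = n by omega]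
      have ha2 : (2:ℝ) ≤ (a n : ℝ) := by exact_mod_cast ha n
      rw [han] at h1
      have hapos : (0:ℝ) < (a n : ℝ) := by linarith
      constructor
      · have : (a n : ℝ) * ω i = (k i : ℝ) + 1 := by linarith
        nlinarith [Nat.cast_nonneg (α := ℝ) (k i)]
      · nlinarith
    | succ m ih =>
      intro i hi
      have hlt : i.1 + 1 < n := by omega
      have hs := ih ⟨i.1+1, hlt⟩ (by show i.1 + 1 + 1 + m = n; omega)
      have h1 := hrel i
      rw [dif_pos hlt] at h1
      have hki : (k i : ℝ) ≤ (a (i.1+1) : ℝ) - 1 := by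
        have hk' := hk i
        rw [if_neg (by omega)] at hk'
        have h2 : (k i) + 1 ≤ a (i.1+1) := by have := ha (i.1+1); omega
        have := (Nat.cast_le (α := ℝ)).2 h2
        push_cast at this
        linarith
      have ha2 : (2:ℝ) ≤ (a (i.1+1) : ℝ) := by exact_mod_cast ha (i.1+1)
      constructor
      · nlinarith [Nat.cast_nonneg (α := ℝ) (k i), hs.2]
      · nlinarith [hs.1]
  have hbounds : ∀ i : Fin n, 0 < ω i ∧ ω i < 1 := fun i => hbound (n - 1 - i.1) i (by omega)
  clear hω hE hdet hvE
  obtain ⟨m, rfl⟩ : ∃ m, n = m + 1 := ⟨n - 1, by omega⟩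
  have hane : ∀ j : ℕ, (a j : ℝ) ≠ 0 := by
    intro j; have := ha j; positivity
  set cN : ℕ → ℝ := fun j => if h : j < m + 1 then (k ⟨j, h⟩ : ℝ) else 0 with hcN
  set ωN : ℕ → ℝ := fun j => if h : j < m + 1 then ω ⟨j, h⟩ else 1 with hωN
  have hcNi : ∀ i : Fin (m+1), cN i.1 = (k i : ℝ) := by
    intro i; rw [hcN]; exact dif_pos i.isLt
  have hωNi : ∀ i : Fin (m+1), ωN i.1 = ω i := by
    intro i; rw [hωN]; exact dif_pos i.isLt
  have h1 : ωN m = (cN m + 1) / a (m+1) := by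
    have hm : m < m + 1 := lt_add_one m
    have hr : (a (m+1) : ℝ) * ω ⟨m, hm⟩ +
        (if h : m + 1 < m + 1 then ω ⟨m+1, h⟩ else 0) = (k ⟨m, hm⟩ : ℝ) + 1 := hrel ⟨m, hm⟩
    rw [dif_neg (by omega)] at hr
    have e1 : ωN m = ω ⟨m, hm⟩ := by simp [hωN]
    have e2 : cN m = (k ⟨m, hm⟩ : ℝ) := by simp [hcN]
    rw [e1, e2, eq_div_iff (hane (m+1))]
    linarith
  have h2 : ∀ i, i < m → ωN i = (cN i + 1 - ωN (i+1)) / a (i+1) := by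
    intro i hi
    have hi1 : i < m + 1 := by omega
    have hi2 : i + 1 < m + 1 := by omega
    have hr : (a (i+1) : ℝ) * ω ⟨i, hi1⟩ +
        (if h : i + 1 < m + 1 then ω ⟨i+1, h⟩ else 0) = (k ⟨i, hi1⟩ : ℝ) + 1 := hrel ⟨i, hi1⟩
    rw [dif_pos hi2] at hr
    have e1 : ωN i = ω ⟨i, hi1⟩ := by rw [hωN]; exact dif_pos hi1
    have e2 : ωN (i+1) = ω ⟨i+1, hi2⟩ := by rw [hωN]; exact dif_pos hi2
    have e3 : cN i = (k ⟨i, hi1⟩ : ℝ) := by rw [hcN]; exact dif_pos hi1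
    rw [e1, e2, e3, eq_div_iff (hane (i+1))]
    linarith
  have h3 : ∀ i, i ≤ m → 0 < ωN i := by
    intro i hi
    have hi1 : i < m + 1 := by omega
    have e1 : ωN i = ω ⟨i, hi1⟩ := by rw [hωN]; exact dif_pos hi1
    rw [e1]
    exact (hbounds ⟨i, hi1⟩).1
  have haux := chain_aux a ha m cN ωN h1 h2 h3
  have hfF : f = chainF a m := funext fun x => by rw [hf x]; rfl
  set S := Set.univ.pi (fun _ : Fin (m+1) => Set.Ici (0:ℝ)) with hS
  have hSm : MeasurableSet S := MeasurableSet.univ_pi (fun _ => measurableSet_Ici)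
  set g : (Fin (m+1) → ℝ) → ℝ := fun x => Real.exp (-(f x)) * ∏ i, x i ^ k i with hg
  have hgm : Measurable g := by
    rw [hg, hfF]
    apply Measurable.mul
    · exact ((measurable_chainF a m).neg.exp)
    · exact Finset.measurable_prod _ (fun i _ => (measurable_pi_apply i).pow_const (k i))
  have hnn : 0 ≤ᵐ[(volume : Measure (Fin (m+1) → ℝ))] fun x => S.indicator g x := by
    apply ae_of_all
    intro x
    apply Set.indicator_nonneg
    intro y hy
    rw [hg]
    apply mul_nonneg (le_of_lt (Real.exp_pos _))
    exact Finset.prod_nonneg fun i _ => pow_nonneg (hy i (Set.mem_univ i)) _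
  have hlin : (∫⁻ x, ENNReal.ofReal (S.indicator g x)) =
      ∫⁻ x : Fin (m+1) → ℝ,
        ENNReal.ofReal (Real.exp (-(chainF a m x))) * ∏ i : Fin (m+1), chainH (cN i.1) (x i) := by
    apply lintegral_congr_ae
    filter_upwards [ae_ne_zero] with x hx
    by_cases hp : ∀ i, 0 < x i
    · have hxS : x ∈ S := fun i _ => le_of_lt (hp i)
      rw [Set.indicator_of_mem hxS, hg]
      simp only
      rw [hfF, ENNReal.ofReal_mul (le_of_lt (Real.exp_pos _))]
      congr 1
      rw [ENNReal.ofReal_prod_of_nonneg (fun i _ => pow_nonneg (le_of_lt (hp i)) _)]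
      apply Finset.prod_congr rfl
      intro i _
      rw [chainH_pos (hp i), hcNi i, Real.rpow_natCast]
    · push_neg at hp
      obtain ⟨i, hi⟩ := hp
      have hneg : x i < 0 := lt_of_le_of_ne hi (hx i)
      have hxS : x ∉ S := fun hxs => absurd (hxs i (Set.mem_univ i)) (not_le.2 hneg)
      rw [Set.indicator_of_notMem hxS, ENNReal.ofReal_zero,
        Finset.prod_eq_zero (Finset.mem_univ i) (chainH_neg (le_of_lt hneg)), mul_zero]
  have hmain : ∫ x in S, Real.exp (-(f x)) * ∏ i, x i ^ k i
      = ENNReal.toReal (∫⁻ x, ENNReal.ofReal (S.indicator g x)) := by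
    rw [← integral_indicator hSm]
    exact integral_eq_lintegral_of_nonneg_ae hnn (hgm.indicator hSm).aestronglyMeasurable
  rw [hmain, hlin, haux, ENNReal.toReal_prod]
  have hterm : ∀ i : Fin (m+1),
      (ENNReal.ofReal ((1/(a (i.1+1):ℝ)) * Real.Gamma (ωN i.1))).toReal
        = (1/(a (i.1+1):ℝ)) * Real.Gamma (ω i) := by
    intro i
    rw [hωNi i, ENNReal.toReal_ofReal]
    have hΓ := Real.Gamma_pos_of_pos (hbounds i).1
    have := ha (i.1+1)
    positivity
  rw [Finset.prod_congr rfl (fun i _ => hterm i), Finset.prod_mul_distrib]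
  congr 1
  rw [hd (m+1)]
  have hprod : (∏ j ∈ Finset.Icc 1 (m+1), a j : ℕ) = ∏ i : Fin (m+1), a (i.1+1) := by
    rw [show Finset.Icc 1 (m+1) = Finset.Ico 1 (m+2) from (Finset.Ico_add_one_right_eq_Icc 1 (m+1)).symm]
    rw [Finset.prod_Ico_eq_prod_range]
    rw [show m+2-1 = m+1 from rfl]
    rw [Fin.prod_univ_eq_prod_range (fun i => a (i+1)) (m+1)]
    apply Finset.prod_congr rfl
    intro i _
    rw [add_comm]
  rw [hprod]
  push_cast
  rw [Finset.prod_div_distrib, Finset.prod_const_one]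
end

section
/- With p_n(t) as above, let χ^{(n)} be the μ̃_n × μ̃_n matrix defined by χ^{(n)} = 1/φ_n(N) where N = (δ_{i+1,j}) is the nilpotent shift matrix. Then the (i,j)-entry of χ^{(n)} equals (1/d_n) Σ_{a=1}^{d_n} p_n(e^{2πi a/d_n}) e^{2πi a (i-j)/d_n}. -/
open Polynomial Complex

lemma shift_pow_entry {μ : ℕ} (N : Matrix (Fin μ) (Fin μ) ℂ)
    (hN : ∀ i j, N i j = if i.1 + 1 = j.1 then 1 else 0) (k : ℕ) :
    ∀ i j, (N ^ k) i j = if i.1 + k = j.1 then 1 else 0 := by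
  induction k with
  | zero =>
    intro i j
    simp [Matrix.one_apply, Fin.ext_iff, eq_comm]
  | succ k ih =>
    intro i j
    rw [pow_succ, Matrix.mul_apply]
    by_cases h : i.1 + (k + 1) = j.1
    · have hk : i.1 + k < μ := by omega
      rw [Finset.sum_eq_single (⟨i.1 + k, hk⟩ : Fin μ)]
      · have h2 : i.1 + k + 1 = j.1 := by omega
        rw [ih, hN]; simp [h2, h]
      · intro l _ hl
        rw [ih, hN]
        rcases eq_or_ne (i.1 + k) l.1 with h1 | h1
        · exact absurd (Fin.ext h1.symm) hl
        · simp [h1]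
      · intro hmem; exact absurd (Finset.mem_univ _) hmem
    · rw [if_neg h]
      apply Finset.sum_eq_zero
      intro l _
      rw [ih, hN]
      rcases eq_or_ne (i.1 + k) l.1 with h1 | h1
      · have : ¬ (l.1 + 1 = j.1) := by omega
        simp [this]
      · simp [h1]

lemma aeval_shift_entry {μ : ℕ} (N : Matrix (Fin μ) (Fin μ) ℂ)
    (hN : ∀ i j, N i j = if i.1 + 1 = j.1 then 1 else 0) (q : Polynomial ℂ) (i j : Fin μ) :
    (Polynomial.aeval N q) i j = if i.1 ≤ j.1 then q.coeff (j.1 - i.1) else 0 := by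
  rw [Polynomial.aeval_eq_sum_range]
  rw [Matrix.sum_apply]
  simp only [Matrix.smul_apply, shift_pow_entry N hN, smul_eq_mul, mul_ite, mul_one, mul_zero]
  by_cases hij : i.1 ≤ j.1
  · rw [if_pos hij]
    have : ∀ k, (i.1 + k = j.1) ↔ (k = j.1 - i.1) := by omega
    simp only [this]
    rw [Finset.sum_ite_eq' (Finset.range (q.natDegree + 1)) (j.1 - i.1) (fun k => q.coeff k)]
    by_cases hr : j.1 - i.1 ∈ Finset.range (q.natDegree + 1)
    · rw [if_pos hr]
    · rw [if_neg hr]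
      rw [Finset.mem_range] at hr
      exact (Polynomial.coeff_eq_zero_of_natDegree_lt (by omega)).symm
  · rw [if_neg hij]
    apply Finset.sum_eq_zero
    intro k _
    rw [if_neg (by omega)]

lemma dft_sum (m : ℕ) (hm : 1 ≤ m) (t : ℤ) :
    ∑ b ∈ Finset.range m, Complex.exp (2 * Real.pi * Complex.I * (t : ℂ) * (b : ℂ) / (m : ℂ))
      = if (m : ℤ) ∣ t then (m : ℂ) else 0 := by
  have hm0 : (m : ℂ) ≠ 0 := Nat.cast_ne_zero.mpr (by omega)
  set ζ : ℂ := Complex.exp (2 * Real.pi * Complex.I * (t : ℂ) / (m : ℂ)) with hζ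
  have hterm : ∀ b : ℕ, Complex.exp (2 * Real.pi * Complex.I * (t : ℂ) * (b : ℂ) / (m : ℂ))
      = ζ ^ b := by
    intro b
    rw [hζ, ← Complex.exp_nat_mul]
    congr 1
    ring
  simp only [hterm]
  by_cases hdvd : (m : ℤ) ∣ t
  · obtain ⟨k, hk⟩ := hdvd
    have hζ1 : ζ = 1 := by
      rw [hζ]
      have : 2 * Real.pi * Complex.I * (t : ℂ) / (m : ℂ) = (k : ℂ) * (2 * Real.pi * Complex.I) := by
        rw [hk]; push_cast; field_simp
      rw [this, Complex.exp_int_mul_two_pi_mul_I]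
    rw [if_pos ⟨k, hk⟩]
    simp [hζ1]
  · have hζm : ζ ^ m = 1 := by
      rw [hζ, ← Complex.exp_nat_mul]
      have : (m : ℂ) * (2 * Real.pi * Complex.I * (t : ℂ) / (m : ℂ))
          = (t : ℂ) * (2 * Real.pi * Complex.I) := by field_simp
      rw [this, Complex.exp_int_mul_two_pi_mul_I]
    have hζ1 : ζ ≠ 1 := by
      intro h1
      rw [hζ, Complex.exp_eq_one_iff] at h1
      obtain ⟨k, hk⟩ := h1
      have h2 : (t : ℂ) = (k : ℂ) * (m : ℂ) := by
        apply mul_left_cancel₀ Complex.two_pi_I_ne_zero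
        rw [div_eq_iff hm0] at hk
        linear_combination hk
      have h3 : t = k * m := by exact_mod_cast h2
      exact hdvd ⟨k, by rw [h3, mul_comm]⟩
    rw [geom_sum_eq hζ1, hζm]
    simp [hdvd]

lemma mu_rec (d : ℕ → ℤ) (k : ℕ) :
    ∑ i ∈ Finset.range (k + 2), (-1 : ℤ) ^ (k + 1 - i) * d i
      = d (k + 1) - ∑ i ∈ Finset.range (k + 1), (-1 : ℤ) ^ (k - i) * d i := by
  rw [Finset.sum_range_succ]
  have h1 : ∀ i ∈ Finset.range (k + 1), (-1 : ℤ) ^ (k + 1 - i) * d i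
      = -((-1 : ℤ) ^ (k - i) * d i) := by
    intro i hi
    rw [Finset.mem_range] at hi
    have h2 : k + 1 - i = (k - i) + 1 := by omega
    rw [h2, pow_succ]; ring
  rw [Finset.sum_congr rfl h1, Finset.sum_neg_distrib]
  simp
  ring

lemma mu_bounds (a : ℕ → ℕ) (ha : ∀ i, 2 ≤ a i) (d : ℕ → ℕ)
    (hd : ∀ i, d i = ∏ j ∈ Finset.Icc 1 i, a j) :
    ∀ k, 1 ≤ ∑ i ∈ Finset.range (k + 1), (-1 : ℤ) ^ (k - i) * (d i : ℤ) ∧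
      ∑ i ∈ Finset.range (k + 1), (-1 : ℤ) ^ (k - i) * (d i : ℤ) ≤ (d k : ℤ) := by
  have hd0 : d 0 = 1 := by rw [hd]; simp
  have hpos : ∀ k, 0 < d k := by
    intro k
    rw [hd]
    exact Finset.prod_pos (fun j _ => by linarith [ha j])
  have hstep : ∀ k, 2 * (d k : ℤ) ≤ (d (k + 1) : ℤ) := by
    intro k
    have h1 : d (k + 1) = d k * a (k + 1) := by
      rw [hd, hd, Finset.prod_Icc_succ_top (by omega : 1 ≤ k + 1)]
    have h2 := ha (k + 1)
    have h3 := hpos k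
    rw [h1]
    push_cast
    nlinarith
  intro k
  induction k with
  | zero => simp [hd0]
  | succ k ih =>
    obtain ⟨ih1, ih2⟩ := ih
    rw [mu_rec]
    have h4 := hstep k
    constructor <;> linarith

lemma sum_Icc_eq_sum_range (D : ℕ) (g : ℕ → ℂ) (hg : g D = g 0) :
    ∑ b ∈ Finset.Icc 1 D, g b = ∑ b ∈ Finset.range D, g b := by
  have h1 : Finset.range (D + 1) = insert 0 (Finset.Icc 1 D) := by
    ext b
    simp only [Finset.mem_range, Finset.mem_insert, Finset.mem_Icc]
    omega
  have h2 := Finset.sum_range_succ g D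
  rw [h1, Finset.sum_insert (by simp), hg] at h2
  exact add_left_cancel (h2.trans (add_comm _ _))


/-- The entries of the Euler matrix χ^{(n)} = 1/φ_n(N) (N the nilpotent shift matrix
of size μ̃_n) are given by the discrete Fourier formula
χ_{ij} = (1/d_n) Σ_{a=1}^{d_n} p_n(e^{2πia/d_n}) e^{2πia(i-j)/d_n}. -/
theorem chain_euler_matrix_entries (n : ℕ) (hn : 1 ≤ n) (a : ℕ → ℕ)
    (ha : ∀ i, 2 ≤ a i)
    (d : ℕ → ℕ) (hd : ∀ i, d i = ∏ j ∈ Finset.Icc 1 i, a j)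
    (μ : ℕ) (hμ : (μ : ℤ) = ∑ i ∈ Finset.range (n + 1), (-1 : ℤ) ^ (n - i) * (d i : ℤ))
    -- num and den are the numerator and denominator of φ_n(t) = ∏_{i=0}^n (1-t^{d_i})^{(-1)^{n-i}}
    (num den : Polynomial ℂ)
    (hnum : num = ∏ i ∈ (Finset.range (n + 1)).filter (fun i => Even (n - i)),
      (1 - Polynomial.X ^ (d i)))
    (hden : den = ∏ i ∈ (Finset.range (n + 1)).filter (fun i => ¬ Even (n - i)),
      (1 - Polynomial.X ^ (d i)))
    -- P is the polynomial p_n(t) = ∏_{i=1}^n (1-t^{d_{i-1}})^{(-1)^{n-i}}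
    (P : Polynomial ℂ)
    (hP : P * ∏ i ∈ (Finset.range n).filter (fun i => ¬ Even (n - 1 - i)),
        (1 - Polynomial.X ^ (d i))
      = ∏ i ∈ (Finset.range n).filter (fun i => Even (n - 1 - i)),
        (1 - Polynomial.X ^ (d i)))
    (N : Matrix (Fin μ) (Fin μ) ℂ)
    (hN : ∀ i j, N i j = if i.1 + 1 = j.1 then 1 else 0)
    -- χ = 1/φ_n(N) = den(N)·num(N)⁻¹
    (χ : Matrix (Fin μ) (Fin μ) ℂ)
    (hχ : χ = (Polynomial.aeval N den) * (Polynomial.aeval N num)⁻¹) :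
    ∀ i j : Fin μ, χ i j = (1 / (d n : ℂ)) * ∑ b ∈ Finset.Icc 1 (d n),
      P.eval (Complex.exp (2 * Real.pi * Complex.I * (b : ℂ) / (d n : ℂ))) *
      Complex.exp (2 * Real.pi * Complex.I * (b : ℂ) * (((i.1 : ℤ) - (j.1 : ℤ)) : ℂ)
        / (d n : ℂ)) := by
  obtain ⟨m, rfl⟩ : ∃ m, n = m + 1 := ⟨n - 1, by omega⟩
  have hd0 : d 0 = 1 := by rw [hd]; simp
  have hpos : ∀ k, 0 < d k := by
    intro k
    rw [hd]
    exact Finset.prod_pos (fun j _ => by linarith [ha j])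
  -- simplify the exponent m + 1 - 1 - i to m - i
  simp only [show m + 1 - 1 = m from rfl] at hP
  set Q : Polynomial ℂ :=
    ∏ i ∈ (Finset.range (m + 1)).filter (fun i => ¬ Even (m - i)),
      (1 - Polynomial.X ^ (d i)) with hQdef
  set R : Polynomial ℂ :=
    ∏ i ∈ (Finset.range (m + 1)).filter (fun i => Even (m - i)),
      (1 - Polynomial.X ^ (d i)) with hRdef
  -- num = (1 - X^{d n}) * Q
  have hnum' : num = (1 - Polynomial.X ^ (d (m + 1))) * Q := by
    rw [hnum, hQdef]
    have hset : (Finset.range (m + 1 + 1)).filter (fun i => Even (m + 1 - i))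
        = insert (m + 1) ((Finset.range (m + 1)).filter (fun i => ¬ Even (m - i))) := by
      ext i
      simp only [Finset.mem_filter, Finset.mem_range, Finset.mem_insert]
      constructor
      · rintro ⟨h1, h2⟩
        rcases eq_or_ne i (m + 1) with h | h
        · left; exact h
        · right
          refine ⟨by omega, ?_⟩
          have he : m + 1 - i = (m - i) + 1 := by omega
          rw [he, Nat.even_add_one] at h2
          exact h2
      · rintro (h | ⟨h1, h2⟩)
        · subst h; simp
        · refine ⟨by omega, ?_⟩
          have he : m + 1 - i = (m - i) + 1 := by omega
          rw [he, Nat.even_add_one]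
          simpa using h2
    rw [hset, Finset.prod_insert (by simp)]
  have hden' : den = R := by
    rw [hden, hRdef]
    congr 1
    ext i
    simp only [Finset.mem_filter, Finset.mem_range]
    constructor
    · rintro ⟨h1, h2⟩
      have hi : i < m + 1 := by
        rcases eq_or_ne i (m + 1) with h | h
        · exfalso; apply h2; subst h; simp
        · omega
      refine ⟨hi, ?_⟩
      have he : m + 1 - i = (m - i) + 1 := by omega
      rw [he, Nat.even_add_one] at h2
      simpa using h2
    · rintro ⟨h1, h2⟩
      refine ⟨by omega, ?_⟩
      have he : m + 1 - i = (m - i) + 1 := by omega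
      rw [he, Nat.even_add_one]
      simpa using h2
  -- nilpotency facts
  have hNpow := shift_pow_entry N hN
  have hNmu : N ^ μ = 0 := by
    ext i j
    rw [hNpow μ i j]
    have h1 : ¬ (i.1 + μ = j.1) := by have := j.2; omega
    simp [h1]
  have hmub := mu_bounds a ha d hd
  have hmudn : μ ≤ d (m + 1) := by
    have h1 := (hmub (m + 1)).2
    rw [← hμ] at h1
    exact_mod_cast h1
  have hNdn : N ^ (d (m + 1)) = 0 := by
    have h1 : d (m + 1) = μ + (d (m + 1) - μ) := by omega
    rw [h1, pow_add, hNmu, zero_mul]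
  -- Q(N) is a unit
  have hQN : IsUnit (Polynomial.aeval N Q) := by
    have hc0 : Q.coeff 0 = 1 := by
      rw [Polynomial.coeff_zero_eq_eval_zero, hQdef, Polynomial.eval_prod]
      apply Finset.prod_eq_one
      intro i _
      have hdi : d i ≠ 0 := by have := hpos i; omega
      simp [zero_pow hdi]
    have hrepr : Polynomial.X * Q.divX + Polynomial.C (Q.coeff 0) = Q :=
      Polynomial.X_mul_divX_add Q
    have heq : Polynomial.aeval N Q = N * Polynomial.aeval N Q.divX + 1 := by
      conv_lhs => rw [← hrepr]
      rw [map_add, map_mul, Polynomial.aeval_X, hc0, map_one, Polynomial.aeval_one]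
    rw [heq]
    have hcom : Commute N (Polynomial.aeval N Q.divX) := by
      have h1 := (Commute.all Polynomial.X Q.divX).map (Polynomial.aeval N)
      simpa using h1
    have hnil : IsNilpotent (N * Polynomial.aeval N Q.divX) :=
      hcom.isNilpotent_mul_right ⟨μ, hNmu⟩
    exact hnil.isUnit_add_one
  have hNum : Polynomial.aeval N num = Polynomial.aeval N Q := by
    rw [hnum', map_mul, map_sub, map_one, map_pow, Polynomial.aeval_X, hNdn, sub_zero, one_mul]
  have hDen : Polynomial.aeval N den = Polynomial.aeval N P * Polynomial.aeval N Q := by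
    rw [hden', ← hP, map_mul]
  have hdet : IsUnit (Polynomial.aeval N Q).det := (Matrix.isUnit_iff_isUnit_det _).mp hQN
  have hchiP : χ = Polynomial.aeval N P := by
    rw [hχ, hNum, hDen, mul_assoc, Matrix.mul_nonsing_inv _ hdet, mul_one]
  -- degree facts
  have hfac : ∀ i : ℕ, (1 - Polynomial.X ^ (d i) : Polynomial ℂ).natDegree = d i := by
    intro i
    have h1 : (1 - Polynomial.X ^ (d i) : Polynomial ℂ)
        = -(Polynomial.X ^ (d i) - Polynomial.C 1) := by
      rw [Polynomial.C_1]; ring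
    rw [h1, Polynomial.natDegree_neg, Polynomial.natDegree_X_pow_sub_C]
  have hfac0 : ∀ i : ℕ, (1 - Polynomial.X ^ (d i) : Polynomial ℂ) ≠ 0 := by
    intro i h
    have h2 := hfac i
    rw [h, Polynomial.natDegree_zero] at h2
    have := hpos i
    omega
  have hQ0 : Q ≠ 0 := by
    rw [hQdef]
    exact Finset.prod_ne_zero_iff.mpr (fun i _ => hfac0 i)
  have hR0 : R ≠ 0 := by
    rw [hRdef]
    exact Finset.prod_ne_zero_iff.mpr (fun i _ => hfac0 i)
  have hP0 : P ≠ 0 := by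
    intro h
    rw [h, zero_mul] at hP
    exact hR0 hP.symm
  have hdegQ : Q.natDegree
      = ∑ i ∈ (Finset.range (m + 1)).filter (fun i => ¬ Even (m - i)), d i := by
    rw [hQdef, Polynomial.natDegree_prod _ _ (fun i _ => hfac0 i)]
    exact Finset.sum_congr rfl (fun i _ => hfac i)
  have hdegR : R.natDegree
      = ∑ i ∈ (Finset.range (m + 1)).filter (fun i => Even (m - i)), d i := by
    rw [hRdef, Polynomial.natDegree_prod _ _ (fun i _ => hfac0 i)]
    exact Finset.sum_congr rfl (fun i _ => hfac i)
  have hdegPQ : P.natDegree + Q.natDegree = R.natDegree := by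
    rw [← hP, Polynomial.natDegree_mul hP0 hQ0]
  -- the alternating sum identity
  have hsplit : (R.natDegree : ℤ) - (Q.natDegree : ℤ)
      = ∑ i ∈ Finset.range (m + 1), (-1 : ℤ) ^ (m - i) * (d i : ℤ) := by
    rw [hdegQ, hdegR]
    rw [← Finset.sum_filter_add_sum_filter_not (Finset.range (m + 1))
      (fun i => Even (m - i)) (fun i => (-1 : ℤ) ^ (m - i) * (d i : ℤ))]
    have e1 : ∑ i ∈ (Finset.range (m + 1)).filter (fun i => Even (m - i)),
        (-1 : ℤ) ^ (m - i) * (d i : ℤ)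
        = ∑ i ∈ (Finset.range (m + 1)).filter (fun i => Even (m - i)), (d i : ℤ) := by
      apply Finset.sum_congr rfl
      intro i hi
      rw [Finset.mem_filter] at hi
      rw [hi.2.neg_one_pow, one_mul]
    have e2 : ∑ i ∈ (Finset.range (m + 1)).filter (fun i => ¬ Even (m - i)),
        (-1 : ℤ) ^ (m - i) * (d i : ℤ)
        = -∑ i ∈ (Finset.range (m + 1)).filter (fun i => ¬ Even (m - i)), (d i : ℤ) := by
      rw [← Finset.sum_neg_distrib]
      apply Finset.sum_congr rfl
      intro i hi
      rw [Finset.mem_filter] at hi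
      rw [(Nat.not_even_iff_odd.mp hi.2).neg_one_pow]
      ring
    rw [e1, e2]
    push_cast
    ring
  have hmurec : (μ : ℤ) = (d (m + 1) : ℤ)
      - ∑ i ∈ Finset.range (m + 1), (-1 : ℤ) ^ (m - i) * (d i : ℤ) := by
    rw [hμ]
    exact mu_rec (fun i => (d i : ℤ)) m
  have hPdeg : P.natDegree + μ = d (m + 1) := by
    have h1 : (P.natDegree : ℤ) + Q.natDegree = R.natDegree := by exact_mod_cast hdegPQ
    omega
  -- final computation
  intro i j
  rw [hchiP, aeval_shift_entry N hN P i j]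
  have hD1 : 1 ≤ d (m + 1) := hpos (m + 1)
  have hD0 : ((d (m + 1) : ℕ) : ℂ) ≠ 0 := Nat.cast_ne_zero.mpr (by omega)
  have hg0 : ∀ b : ℕ,
      P.eval (Complex.exp (2 * Real.pi * Complex.I * (b : ℂ) / (d (m + 1) : ℂ))) *
        Complex.exp (2 * Real.pi * Complex.I * (b : ℂ) * (((i.1 : ℤ) : ℂ) - ((j.1 : ℤ) : ℂ))
          / (d (m + 1) : ℂ))
      = ∑ k ∈ Finset.range (P.natDegree + 1),
          P.coeff k * Complex.exp (2 * Real.pi * Complex.I *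
            ((((k : ℤ) + ((i.1 : ℤ) - (j.1 : ℤ))) : ℤ) : ℂ) * (b : ℂ) / (d (m + 1) : ℂ)) := by
    intro b
    rw [Polynomial.eval_eq_sum_range, Finset.sum_mul]
    apply Finset.sum_congr rfl
    intro k _
    rw [mul_assoc]
    congr 1
    rw [← Complex.exp_nat_mul, ← Complex.exp_add]
    congr 1
    push_cast
    ring
  simp only [hg0]
  rw [sum_Icc_eq_sum_range]
  · rw [Finset.sum_comm]
    have hinner : ∀ k ∈ Finset.range (P.natDegree + 1),
        ∑ b ∈ Finset.range (d (m + 1)), P.coeff k * Complex.exp (2 * Real.pi * Complex.I *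
            ((((k : ℤ) + ((i.1 : ℤ) - (j.1 : ℤ))) : ℤ) : ℂ) * (b : ℂ) / (d (m + 1) : ℂ))
        = P.coeff k * (if ((d (m + 1) : ℤ)) ∣ ((k : ℤ) + ((i.1 : ℤ) - (j.1 : ℤ))) then
            ((d (m + 1) : ℕ) : ℂ) else 0) := by
      intro k _
      rw [← Finset.mul_sum, dft_sum (d (m + 1)) hD1]
    rw [Finset.sum_congr rfl hinner]
    have hcond : ∀ k ∈ Finset.range (P.natDegree + 1),
        (((d (m + 1) : ℤ)) ∣ ((k : ℤ) + ((i.1 : ℤ) - (j.1 : ℤ))))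
          ↔ ((k : ℤ) + ((i.1 : ℤ) - (j.1 : ℤ)) = 0) := by
      intro k hk
      rw [Finset.mem_range] at hk
      constructor
      · intro hdvd
        refine Int.eq_zero_of_abs_lt_dvd hdvd ?_
        rw [abs_lt]
        have hi2 := i.2
        have hj2 := j.2
        constructor <;> omega
      · intro h
        rw [h]
        exact dvd_zero _
    by_cases hij : i.1 ≤ j.1
    · rw [if_pos hij]
      have hterm : ∀ k ∈ Finset.range (P.natDegree + 1),
          (P.coeff k * if ((d (m + 1) : ℤ)) ∣ ((k : ℤ) + ((i.1 : ℤ) - (j.1 : ℤ))) then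
            ((d (m + 1) : ℕ) : ℂ) else 0)
          = if k = j.1 - i.1 then P.coeff k * ((d (m + 1) : ℕ) : ℂ) else 0 := by
        intro k hk
        have hiff : (((d (m + 1) : ℤ)) ∣ ((k : ℤ) + ((i.1 : ℤ) - (j.1 : ℤ))))
            ↔ k = j.1 - i.1 := by
          rw [hcond k hk]
          omega
        by_cases h : k = j.1 - i.1
        · rw [if_pos (hiff.mpr h), if_pos h]
        · rw [if_neg (fun hc => h (hiff.mp hc)), if_neg h, mul_zero]
      rw [Finset.sum_congr rfl hterm,
        Finset.sum_ite_eq' (Finset.range (P.natDegree + 1)) (j.1 - i.1)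
          (fun k => P.coeff k * ((d (m + 1) : ℕ) : ℂ))]
      by_cases hr : j.1 - i.1 ∈ Finset.range (P.natDegree + 1)
      · rw [if_pos hr]
        field_simp
      · rw [if_neg hr, mul_zero]
        rw [Finset.mem_range] at hr
        rw [Polynomial.coeff_eq_zero_of_natDegree_lt (by omega)]
    · rw [if_neg hij]
      have hterm : ∀ k ∈ Finset.range (P.natDegree + 1),
          (P.coeff k * if ((d (m + 1) : ℤ)) ∣ ((k : ℤ) + ((i.1 : ℤ) - (j.1 : ℤ))) then
            ((d (m + 1) : ℕ) : ℂ) else 0) = 0 := by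
        intro k hk
        have hnot : ¬ (((d (m + 1) : ℤ)) ∣ ((k : ℤ) + ((i.1 : ℤ) - (j.1 : ℤ)))) := by
          rw [hcond k hk]
          omega
        rw [if_neg hnot, mul_zero]
      rw [Finset.sum_congr rfl hterm, Finset.sum_const_zero, mul_zero]
  · apply Finset.sum_congr rfl
    intro k _
    congr 1
    have e1 : 2 * (Real.pi : ℂ) * Complex.I *
        ((((k : ℤ) + ((i.1 : ℤ) - (j.1 : ℤ))) : ℤ) : ℂ) * ((d (m + 1) : ℕ) : ℂ)
          / ((d (m + 1) : ℕ) : ℂ)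
        = ((((k : ℤ) + ((i.1 : ℤ) - (j.1 : ℤ))) : ℤ) : ℂ) * (2 * Real.pi * Complex.I) := by
      field_simp
    rw [e1, Complex.exp_int_mul_two_pi_mul_I]
    norm_num
end

section
/- For n = 2m-1 odd, κ ∈ I'_n, define c^{(n)}_κ := ∏_{l=1}^n Γ(1 - ω_{κ,l}) · ∏_{i=1}^m (1 - e^{2πi ω_{κ,2i-1}}). Then (1/(2π)^n) · c^{(n)}_κ · e^{πi Σ_{l=1}^n (ω_{κ,l} - 1/2)} · (1/d_n) · c^{(n)}_{d_n - κ} = (1/d_n) p_n(e^{2πi ω_{κ,1}}), where p_n(t) = ∏_{i=1}^n (1 - t^{d_{i-1}})^{(-1)^{n-i}}. -/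
open Complex

private lemma prodSplit (f : ℕ → ℂ) (m n : ℕ) (hm : 1 ≤ m) (hn : n = 2*m-1) :
    ∏ l ∈ Finset.Icc 1 n, f l =
      (∏ i ∈ Finset.Icc 1 m, f (2*i-1)) * ∏ i ∈ Finset.Icc 1 (m-1), f (2*i) := by
  subst hn
  induction m, hm using Nat.le_induction with
  | base => simp
  | succ k hk ih =>
    have h1 : 2*(k+1)-1 = (2*k-1) + 1 + 1 := by omega
    rw [h1, Finset.prod_Icc_succ_top (by omega), Finset.prod_Icc_succ_top (by omega), ih,
        Finset.prod_Icc_succ_top (show 1 ≤ k + 1 by omega),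
        show (k+1)-1 = (k-1)+1 by omega,
        Finset.prod_Icc_succ_top (show 1 ≤ (k-1)+1 by omega),
        show 2*k-1+1 = 2*((k-1)+1) by omega,
        show 2*(k-1+1)+1 = 2*(k+1)-1 by omega]
    ring

private lemma expNeOne (x : ℝ) (h0 : 0 < x) (h1 : x < 1) :
    Complex.exp (2 * (Real.pi:ℂ) * Complex.I * (x:ℂ)) ≠ 1 := by
  intro h
  obtain ⟨z, hz⟩ := Complex.exp_eq_one_iff.mp h
  have hpi : (2*(Real.pi:ℂ)*Complex.I) ≠ 0 := by
    simp [Real.pi_ne_zero, Complex.I_ne_zero]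
  have h2 : (x:ℂ) = (z:ℂ) := by
    apply mul_left_cancel₀ hpi
    rw [hz]; ring
  have h3 : x = (z:ℝ) := by exact_mod_cast h2
  have h4 : (0:ℝ) < (z:ℝ) := h3 ▸ h0
  have h5 : ((z:ℝ)) < 1 := h3 ▸ h1
  have h6 : 0 < z := by exact_mod_cast h4
  have h7 : z < 1 := by exact_mod_cast h5
  omega

private lemma key1 (x : ℝ) (h0 : 0 < x) (h1 : x < 1) :
    Complex.Gamma (1 - (x:ℂ)) * Complex.Gamma (x:ℂ) *
      Complex.exp ((Real.pi:ℂ) * Complex.I * ((x:ℂ) - 1/2)) =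
    2 * (Real.pi:ℂ) * (Complex.exp (2 * (Real.pi:ℂ) * Complex.I * (x:ℂ)) /
      (Complex.exp (2 * (Real.pi:ℂ) * Complex.I * (x:ℂ)) - 1)) := by
  have hG := Complex.Gamma_mul_Gamma_one_sub (x:ℂ)
  have hsinR : Real.sin (Real.pi * x) ≠ 0 := by
    have := Real.sin_pos_of_pos_of_lt_pi (x := Real.pi * x) (by positivity)
      (by nlinarith [Real.pi_pos])
    exact this.ne'
  have hsin : Complex.sin ((Real.pi:ℂ) * (x:ℂ)) ≠ 0 := by
    rw [show ((Real.pi:ℂ) * (x:ℂ)) = ((Real.pi * x : ℝ) : ℂ) by push_cast; ring,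
      ← Complex.ofReal_sin]
    exact_mod_cast hsinR
  set e := Complex.exp ((Real.pi:ℂ) * Complex.I * (x:ℂ)) with he
  have he0 : e ≠ 0 := Complex.exp_ne_zero _
  have h2x : Complex.exp (2*(Real.pi:ℂ)*Complex.I*(x:ℂ)) = e * e := by
    rw [he, ← Complex.exp_add]; congr 1; ring
  have hem : e * e - 1 ≠ 0 := by
    rw [← h2x]; exact sub_ne_zero.mpr (expNeOne x h0 h1)
  have hsine : Complex.sin ((Real.pi:ℂ) * (x:ℂ)) = (e⁻¹ - e) * Complex.I / 2 := by
    rw [Complex.sin, ← Complex.exp_neg,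
      show (-((Real.pi:ℂ)*(x:ℂ))*Complex.I) = -((Real.pi:ℂ)*Complex.I*(x:ℂ)) by ring,
      show (((Real.pi:ℂ)*(x:ℂ))*Complex.I) = (Real.pi:ℂ)*Complex.I*(x:ℂ) by ring]
  have hE2 : Complex.exp ((Real.pi:ℂ)*Complex.I*((x:ℂ) - 1/2)) = e * (-Complex.I) := by
    rw [show (Real.pi:ℂ)*Complex.I*((x:ℂ)-1/2)
        = (Real.pi:ℂ)*Complex.I*(x:ℂ) + (-((Real.pi:ℂ)/2))*Complex.I by ring,
      Complex.exp_add]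
    congr 1
    rw [Complex.exp_mul_I]
    simp [Complex.cos_neg, Complex.sin_neg, Complex.cos_pi_div_two, Complex.sin_pi_div_two]
  have hden : (e⁻¹ - e) * Complex.I / 2 ≠ 0 := hsine ▸ hsin
  rw [show Complex.Gamma (1 - (x:ℂ)) * Complex.Gamma (x:ℂ)
      = Complex.Gamma (x:ℂ) * Complex.Gamma (1 - (x:ℂ)) from mul_comm _ _,
    hG, hE2, h2x, hsine]
  have hI : Complex.I ≠ 0 := Complex.I_ne_zero
  field_simp
  ring_nf
  have hX : (-(e^2*Complex.I)+Complex.I) ≠ 0 := by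
    have hh : (-(e^2*Complex.I)+Complex.I) = -Complex.I * (e*e - 1) := by ring
    rw [hh]; exact mul_ne_zero (neg_ne_zero.mpr hI) hem
  field_simp [hX]
  ring_nf
  rw [show (-1 + e^2) = -(1 - e^2) by ring, inv_neg]

/-- Key coefficient computation (odd case n = 2m-1):
(1/(2π)^n)·c_κ·e^{πiΣ_l(ω_{κ,l}-1/2)}·(1/d_n)·c_{d_n-κ} = (1/d_n)·p_n(e^{2πiω_{κ,1}}). -/
theorem chain_coefficient_odd (m n : ℕ) (hm : 1 ≤ m) (hn : n = 2 * m - 1)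
    (a : ℕ → ℕ) (ha : ∀ i, 2 ≤ a i)
    (d : ℕ → ℕ) (hd : ∀ i, d i = ∏ j ∈ Finset.Icc 1 i, a j)
    (ω : ℕ → ℕ → ℝ)
    (hω : ∀ κ l, ω κ l =
      Int.fract ((-1 : ℝ) ^ (l - 1) * ((d (l - 1) : ℝ) / (d n : ℝ)) * (κ : ℝ)))
    (c : ℕ → ℂ)
    (hc : ∀ κ', c κ' =
      (∏ l ∈ Finset.Icc 1 n, Complex.Gamma (1 - (ω κ' l : ℂ))) *
      ∏ i ∈ Finset.Icc 1 m,
        (1 - Complex.exp (2 * Real.pi * Complex.I * (ω κ' (2 * i - 1) : ℂ))))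
    (κ : ℕ) (hκ1 : 1 ≤ κ) (hκ2 : κ ≤ d n) (hκ3 : ¬ a n ∣ κ) :
    (1 / (2 * (Real.pi : ℂ)) ^ n) * c κ *
      Complex.exp (Real.pi * Complex.I *
        ((∑ l ∈ Finset.Icc 1 n, (ω κ l - 1 / 2) : ℝ) : ℂ)) *
      (1 / (d n : ℂ)) * c (d n - κ)
    = (1 / (d n : ℂ)) * ∏ i ∈ Finset.Icc 1 n,
        (1 - Complex.exp (2 * Real.pi * Complex.I * (ω κ 1 : ℂ)) ^ (d (i - 1)))
          ^ ((-1 : ℤ) ^ (n - i)) := by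
  have hn1 : 1 ≤ n := by omega
  have hdpos : ∀ i, 0 < d i := by
    intro i
    rw [hd]
    exact Finset.prod_pos fun j _ => lt_of_lt_of_le (by norm_num) (ha j)
  have hd0 : d 0 = 1 := by rw [hd]; simp
  have hand : a n ∣ d n := by
    rw [hd n]
    exact Finset.dvd_prod_of_mem a (Finset.mem_Icc.mpr ⟨hn1, le_refl n⟩)
  have hκlt : κ < d n := by
    rcases lt_or_eq_of_le hκ2 with h | h
    · exact h
    · exact absurd (h ▸ hand) hκ3
  have hdnR : (0:ℝ) < (d n : ℝ) := by exact_mod_cast hdpos n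
  have hnd : ∀ l, 1 ≤ l → l ≤ n → ¬ (d n ∣ d (l-1) * κ) := by
    intro l hl1 hln hdvd
    have hsplit : d n = d (l-1) * ∏ j ∈ Finset.Ioc (l-1) n, a j := by
      rw [hd n, hd (l-1),
        show Finset.Icc 1 n = Finset.Ioc 0 n from by rw [← Finset.Icc_add_one_left_eq_Ioc, zero_add],
        show Finset.Icc 1 (l-1) = Finset.Ioc 0 (l-1) from by rw [← Finset.Icc_add_one_left_eq_Ioc, zero_add],
        Finset.prod_Ioc_consecutive a (Nat.zero_le (l-1)) (by omega)]
    rw [hsplit] at hdvd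
    have hPκ : (∏ j ∈ Finset.Ioc (l-1) n, a j) ∣ κ :=
      (mul_dvd_mul_iff_left (hdpos (l-1)).ne').mp hdvd
    exact hκ3 ((Finset.dvd_prod_of_mem a (Finset.mem_Ioc.mpr ⟨by omega, le_refl n⟩)).trans hPκ)
  have hxnotint : ∀ l, 1 ≤ l → l ≤ n → ∀ z : ℤ,
      ((d (l-1) : ℝ) * κ / (d n : ℝ)) ≠ (z:ℝ) := by
    intro l hl1 hln z hz
    apply hnd l hl1 hln
    rw [div_eq_iff hdnR.ne'] at hz
    have hz' : ((d (l-1) * κ : ℕ) : ℤ) = (d n : ℤ) * z := by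
      exact_mod_cast (by push_cast; linarith [hz] :
        ((d (l-1) * κ : ℕ) : ℝ) = (d n : ℝ) * z)
    have hdv : (d n : ℤ) ∣ ((d (l-1) * κ : ℕ) : ℤ) := ⟨z, hz'⟩
    exact_mod_cast hdv
  have hnotint : ∀ l, 1 ≤ l → l ≤ n → ∀ z : ℤ,
      ((-1:ℝ)) ^ (l-1) * ((d (l-1):ℝ) / (d n:ℝ)) * κ ≠ (z:ℝ) := by
    intro l hl1 hln z hz
    rcases Nat.even_or_odd (l-1) with hpar | hpar
    · rw [hpar.neg_one_pow, one_mul] at hz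
      exact hxnotint l hl1 hln z (by rw [← hz]; ring)
    · rw [hpar.neg_one_pow] at hz
      refine hxnotint l hl1 hln (-z) ?_
      push_cast
      have : -((d (l-1):ℝ) * κ / (d n:ℝ)) = (z:ℝ) := by rw [← hz]; ring
      linarith
  have hfr : ∀ y : ℝ, (∀ z : ℤ, y ≠ z) → Int.fract y ≠ 0 := by
    intro y hy h
    obtain ⟨-, -, z, hz⟩ := Int.fract_eq_iff.mp h
    exact hy z (by linarith)
  have hω01 : ∀ l, 1 ≤ l → l ≤ n → 0 < ω κ l ∧ ω κ l < 1 := by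
    intro l hl1 hln
    rw [hω]
    exact ⟨lt_of_le_of_ne (Int.fract_nonneg _)
      (Ne.symm (hfr _ (hnotint l hl1 hln))), Int.fract_lt_one _⟩
  have hfrκ : ∀ l, 1 ≤ l → l ≤ n → Int.fract ((d (l-1):ℝ)/(d n:ℝ) * κ) ≠ 0 := by
    intro l hl1 hln
    apply hfr
    intro z hz
    exact hxnotint l hl1 hln z (by rw [← hz]; ring)
  have hωrefl : ∀ l, 1 ≤ l → l ≤ n → ω (d n - κ) l = 1 - ω κ l := by
    intro l hl1 hln
    rw [hω, hω]
    have hcast : ((d n - κ : ℕ) : ℝ) = (d n : ℝ) - κ := by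
      push_cast [hκ2]
      ring
    rw [hcast]
    rcases Nat.even_or_odd (l-1) with hpar | hpar
    · rw [hpar.neg_one_pow]
      rw [show (1:ℝ) * ((d (l-1):ℝ)/(d n:ℝ)) * ((d n:ℝ) - κ)
          = ((d (l-1):ℤ):ℝ) + -((d (l-1):ℝ)/(d n:ℝ) * κ) by
        push_cast; field_simp; ring]
      rw [Int.fract_intCast_add, Int.fract_neg (hfrκ l hl1 hln)]
      rw [show (1:ℝ) * ((d (l-1):ℝ)/(d n:ℝ)) * κ = (d (l-1):ℝ)/(d n:ℝ) * κ by ring]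
    · rw [hpar.neg_one_pow]
      rw [show (-1:ℝ) * ((d (l-1):ℝ)/(d n:ℝ)) * ((d n:ℝ) - κ)
          = ((d (l-1):ℝ)/(d n:ℝ) * κ) - ((d (l-1):ℤ):ℝ) by
        push_cast; field_simp; ring]
      rw [Int.fract_sub_intCast]
      rw [show (-1:ℝ) * ((d (l-1):ℝ)/(d n:ℝ)) * κ = -((d (l-1):ℝ)/(d n:ℝ) * κ) by ring]
      rw [Int.fract_neg (hfrκ l hl1 hln)]
      ring
  set t : ℂ := Complex.exp (2 * (Real.pi:ℂ) * Complex.I * ((κ:ℂ) / (d n:ℂ))) with ht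
  have ht0 : t ≠ 0 := Complex.exp_ne_zero _
  have hfract_exp : ∀ y : ℝ,
      Complex.exp (2 * (Real.pi:ℂ) * Complex.I * ((Int.fract y : ℝ):ℂ))
        = Complex.exp (2 * (Real.pi:ℂ) * Complex.I * (y:ℂ)) := by
    intro y
    have h1 : ((Int.fract y : ℝ) : ℂ) = (y:ℂ) - ((⌊y⌋:ℤ):ℂ) := by
      rw [← Int.self_sub_floor]
      push_cast
      ring
    rw [h1, mul_sub, Complex.exp_sub,
      show 2*(Real.pi:ℂ)*Complex.I*((⌊y⌋:ℤ):ℂ)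
        = ((⌊y⌋:ℤ):ℂ)*(2*(Real.pi:ℂ)*Complex.I) by ring,
      Complex.exp_int_mul_two_pi_mul_I, div_one]
  have hpow : ∀ D : ℕ, t ^ D
      = Complex.exp (2 * (Real.pi:ℂ) * Complex.I * ((D:ℂ) * κ / (d n:ℂ))) := by
    intro D
    rw [ht, ← Complex.exp_nat_mul]
    congr 1
    ring
  have htD : ∀ l, 1 ≤ l → l ≤ n → t ^ (d (l-1)) ≠ 1 := by
    intro l hl1 hln h
    rw [hpow] at h
    obtain ⟨z, hz⟩ := Complex.exp_eq_one_iff.mp h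
    have hpiC : (2*(Real.pi:ℂ)*Complex.I) ≠ 0 := by
      simp [Real.pi_ne_zero, Complex.I_ne_zero]
    have h2 : ((d (l-1):ℂ) * κ / (d n:ℂ)) = (z:ℂ) := by
      apply mul_left_cancel₀ hpiC
      rw [hz]; ring
    have h3 : ((d (l-1):ℝ) * κ / (d n:ℝ)) = (z:ℝ) := by
      apply Complex.ofReal_injective
      push_cast
      exact h2
    exact hxnotint l hl1 hln z h3
  have hexpodd : ∀ i, 1 ≤ i →
      Complex.exp (2 * (Real.pi:ℂ) * Complex.I * ((ω κ (2*i-1) : ℝ):ℂ))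
        = t ^ (d (2*i-1-1)) := by
    intro i hi
    rw [hω, hfract_exp, hpow]
    congr 1
    push_cast
    rw [Even.neg_one_pow (⟨i-1, by omega⟩ : Even (2*i-1-1))]
    ring
  have hexpeven : ∀ i, 1 ≤ i →
      Complex.exp (2 * (Real.pi:ℂ) * Complex.I * ((ω κ (2*i) : ℝ):ℂ))
        = (t ^ (d (2*i-1)))⁻¹ := by
    intro i hi
    rw [hω, hfract_exp, hpow, ← Complex.exp_neg]
    congr 1
    push_cast
    rw [Odd.neg_one_pow (⟨i-1, by omega⟩ : Odd (2*i-1))]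
    ring
  have hω1 : ω κ 1 = (κ:ℝ)/(d n:ℝ) := by
    rw [hω]
    rw [show ((-1:ℝ)) ^ (1-1) * ((d (1-1):ℝ)/(d n:ℝ)) * κ = (κ:ℝ)/(d n:ℝ) by
      norm_num [hd0]; ring]
    exact Int.fract_eq_self.mpr ⟨by positivity, by
      rw [div_lt_one hdnR]; exact_mod_cast hκlt⟩
  have hT : Complex.exp (2 * (Real.pi:ℂ) * Complex.I * ((ω κ 1 : ℝ):ℂ)) = t := by
    rw [hω1, ht]
    congr 1
    push_cast
    ring
  have hcκ : c κ = (∏ l ∈ Finset.Icc 1 n, Complex.Gamma (1 - (ω κ l : ℂ))) *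
      ∏ i ∈ Finset.Icc 1 m, (1 - t ^ (d (2*i-1-1))) := by
    rw [hc]
    congr 1
    refine Finset.prod_congr rfl fun i hi => ?_
    rw [hexpodd i (Finset.mem_Icc.mp hi).1]
  have hcκ' : c (d n - κ) = (∏ l ∈ Finset.Icc 1 n, Complex.Gamma ((ω κ l : ℂ))) *
      ∏ i ∈ Finset.Icc 1 m, (1 - (t ^ (d (2*i-1-1)))⁻¹) := by
    rw [hc]
    congr 1
    · refine Finset.prod_congr rfl fun l hl => ?_
      obtain ⟨hl1, hln⟩ := Finset.mem_Icc.mp hl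
      rw [hωrefl l hl1 hln]
      congr 1
      push_cast
      ring
    · refine Finset.prod_congr rfl fun i hi => ?_
      obtain ⟨hi1, him⟩ := Finset.mem_Icc.mp hi
      rw [hωrefl (2*i-1) (by omega) (by omega)]
      rw [show 2*(Real.pi:ℂ)*Complex.I*(((1 - ω κ (2*i-1) : ℝ)):ℂ)
          = 2*(Real.pi:ℂ)*Complex.I
            + -(2*(Real.pi:ℂ)*Complex.I*((ω κ (2*i-1):ℝ):ℂ)) by
        push_cast; ring]
      rw [Complex.exp_add, Complex.exp_two_pi_mul_I, one_mul, Complex.exp_neg,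
        hexpodd i hi1]
  have hE : Complex.exp ((Real.pi:ℂ) * Complex.I *
      ((∑ l ∈ Finset.Icc 1 n, (ω κ l - 1/2) : ℝ):ℂ))
      = ∏ l ∈ Finset.Icc 1 n,
          Complex.exp ((Real.pi:ℂ)*Complex.I*((ω κ l :ℂ) - 1/2)) := by
    rw [show ((Real.pi:ℂ) * Complex.I * ((∑ l ∈ Finset.Icc 1 n, (ω κ l - 1/2) : ℝ):ℂ))
        = ∑ l ∈ Finset.Icc 1 n, (Real.pi:ℂ)*Complex.I*((ω κ l :ℂ) - 1/2) by
      push_cast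
      rw [Finset.mul_sum]]
    exact Complex.exp_sum _ _
  have hkey : ∀ l ∈ Finset.Icc 1 n,
      Complex.Gamma (1 - (ω κ l : ℂ)) * Complex.Gamma ((ω κ l : ℂ)) *
        Complex.exp ((Real.pi:ℂ)*Complex.I*((ω κ l :ℂ) - 1/2))
      = 2 * (Real.pi:ℂ) *
        (Complex.exp (2*(Real.pi:ℂ)*Complex.I*((ω κ l:ℝ):ℂ)) /
         (Complex.exp (2*(Real.pi:ℂ)*Complex.I*((ω κ l:ℝ):ℂ)) - 1)) := fun l hl => by
    obtain ⟨h1, h2⟩ := Finset.mem_Icc.mp hl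
    exact key1 _ (hω01 l h1 h2).1 (hω01 l h1 h2).2
  have hGGE : (∏ l ∈ Finset.Icc 1 n, Complex.Gamma (1 - (ω κ l : ℂ))) *
      (∏ l ∈ Finset.Icc 1 n,
        Complex.exp ((Real.pi:ℂ)*Complex.I*((ω κ l :ℂ) - 1/2))) *
      (∏ l ∈ Finset.Icc 1 n, Complex.Gamma ((ω κ l : ℂ)))
      = (2*(Real.pi:ℂ))^n *
        ((∏ i ∈ Finset.Icc 1 m,
            (Complex.exp (2*(Real.pi:ℂ)*Complex.I*((ω κ (2*i-1):ℝ):ℂ)) /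
             (Complex.exp (2*(Real.pi:ℂ)*Complex.I*((ω κ (2*i-1):ℝ):ℂ)) - 1))) *
         (∏ i ∈ Finset.Icc 1 (m-1),
            (Complex.exp (2*(Real.pi:ℂ)*Complex.I*((ω κ (2*i):ℝ):ℂ)) /
             (Complex.exp (2*(Real.pi:ℂ)*Complex.I*((ω κ (2*i):ℝ):ℂ)) - 1)))) := by
    rw [← Finset.prod_mul_distrib, ← Finset.prod_mul_distrib]
    rw [Finset.prod_congr rfl (fun l hl => show
        Complex.Gamma (1 - (ω κ l : ℂ)) *
          Complex.exp ((Real.pi:ℂ)*Complex.I*((ω κ l :ℂ) - 1/2)) *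
          Complex.Gamma ((ω κ l : ℂ))
        = 2 * (Real.pi:ℂ) *
          (Complex.exp (2*(Real.pi:ℂ)*Complex.I*((ω κ l:ℝ):ℂ)) /
           (Complex.exp (2*(Real.pi:ℂ)*Complex.I*((ω κ l:ℝ):ℂ)) - 1)) from by
      rw [← hkey l hl]; ring)]
    rw [Finset.prod_mul_distrib, Finset.prod_const, Nat.card_Icc]
    rw [show n + 1 - 1 = n from rfl]
    congr 1
    exact prodSplit (fun l =>
      Complex.exp (2*(Real.pi:ℂ)*Complex.I*((ω κ l:ℝ):ℂ)) /
      (Complex.exp (2*(Real.pi:ℂ)*Complex.I*((ω κ l:ℝ):ℂ)) - 1)) m n hm hn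
  have hodd : (∏ i ∈ Finset.Icc 1 m,
        (Complex.exp (2*(Real.pi:ℂ)*Complex.I*((ω κ (2*i-1):ℝ):ℂ)) /
         (Complex.exp (2*(Real.pi:ℂ)*Complex.I*((ω κ (2*i-1):ℝ):ℂ)) - 1))) *
      ((∏ i ∈ Finset.Icc 1 m, (1 - t ^ (d (2*i-1-1)))) *
       (∏ i ∈ Finset.Icc 1 m, (1 - (t ^ (d (2*i-1-1)))⁻¹)))
      = ∏ i ∈ Finset.Icc 1 m, (1 - t ^ (d (2*i-1-1))) := by
    rw [← Finset.prod_mul_distrib, ← Finset.prod_mul_distrib]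
    refine Finset.prod_congr rfl fun i hi => ?_
    obtain ⟨hi1, him⟩ := Finset.mem_Icc.mp hi
    rw [hexpodd i hi1]
    have hu1 : t ^ (d (2*i-1-1)) ≠ 1 := htD (2*i-1) (by omega) (by omega)
    have hu0 : t ^ (d (2*i-1-1)) ≠ 0 := pow_ne_zero _ ht0
    have hs : t ^ (d (2*i-1-1)) - 1 ≠ 0 := sub_ne_zero.mpr hu1
    field_simp
  have heven : (∏ i ∈ Finset.Icc 1 (m-1),
        (Complex.exp (2*(Real.pi:ℂ)*Complex.I*((ω κ (2*i):ℝ):ℂ)) /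
         (Complex.exp (2*(Real.pi:ℂ)*Complex.I*((ω κ (2*i):ℝ):ℂ)) - 1)))
      = (∏ i ∈ Finset.Icc 1 (m-1), (1 - t ^ (d (2*i-1))))⁻¹ := by
    rw [← Finset.prod_inv_distrib]
    refine Finset.prod_congr rfl fun i hi => ?_
    obtain ⟨hi1, him⟩ := Finset.mem_Icc.mp hi
    have h2in : 2*i ≤ n := by omega
    rw [show (2*i) - 1 = 2*i-1 from rfl] at *
    rw [hexpeven i hi1]
    have hu1 : t ^ (d (2*i-1)) ≠ 1 := htD (2*i) (by omega) (by omega)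
    have hu0 : t ^ (d (2*i-1)) ≠ 0 := pow_ne_zero _ ht0
    have h1 : (1 - t ^ (d (2*i-1))) ≠ 0 := sub_ne_zero.mpr (Ne.symm hu1)
    have h2 : (t ^ (d (2*i-1)))⁻¹ - 1 ≠ 0 :=
      sub_ne_zero.mpr (fun h => hu1 (inv_eq_one.mp h))
    field_simp
  have hR : (∏ i ∈ Finset.Icc 1 n, (1 - t ^ (d (i-1))) ^ ((-1:ℤ)^(n-i)))
      = (∏ i ∈ Finset.Icc 1 m, (1 - t ^ (d (2*i-1-1)))) *
        (∏ i ∈ Finset.Icc 1 (m-1), (1 - t ^ (d (2*i-1))))⁻¹ := by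
    rw [prodSplit (fun i => (1 - t ^ (d (i-1))) ^ ((-1:ℤ)^(n-i))) m n hm hn]
    congr 1
    · refine Finset.prod_congr rfl fun i hi => ?_
      obtain ⟨hi1, him⟩ := Finset.mem_Icc.mp hi
      rw [show ((-1:ℤ))^(n-(2*i-1)) = 1 from Even.neg_one_pow ⟨m-i, by omega⟩, zpow_one]
    · rw [← Finset.prod_inv_distrib]
      refine Finset.prod_congr rfl fun i hi => ?_
      obtain ⟨hi1, him⟩ := Finset.mem_Icc.mp hi
      rw [show ((-1:ℤ))^(n-(2*i)) = -1 from Odd.neg_one_pow ⟨m-i-1, by omega⟩,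
        zpow_neg_one]
  have h2πn : ((2*(Real.pi:ℂ))^n) ≠ 0 :=
    pow_ne_zero _ (by simp [Real.pi_ne_zero])
  rw [hcκ, hcκ', hE, hT, hR]
  calc (1 / (2 * (Real.pi : ℂ)) ^ n) *
        ((∏ l ∈ Finset.Icc 1 n, Complex.Gamma (1 - (ω κ l : ℂ))) *
          ∏ i ∈ Finset.Icc 1 m, (1 - t ^ (d (2*i-1-1)))) *
        (∏ l ∈ Finset.Icc 1 n,
          Complex.exp ((Real.pi:ℂ)*Complex.I*((ω κ l :ℂ) - 1/2))) *
        (1 / (d n : ℂ)) *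
        ((∏ l ∈ Finset.Icc 1 n, Complex.Gamma ((ω κ l : ℂ))) *
          ∏ i ∈ Finset.Icc 1 m, (1 - (t ^ (d (2*i-1-1)))⁻¹))
      = (1 / (2 * (Real.pi : ℂ)) ^ n) *
        (((∏ l ∈ Finset.Icc 1 n, Complex.Gamma (1 - (ω κ l : ℂ))) *
          (∏ l ∈ Finset.Icc 1 n,
            Complex.exp ((Real.pi:ℂ)*Complex.I*((ω κ l :ℂ) - 1/2))) *
          (∏ l ∈ Finset.Icc 1 n, Complex.Gamma ((ω κ l : ℂ)))) *
         ((∏ i ∈ Finset.Icc 1 m, (1 - t ^ (d (2*i-1-1)))) *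
          (∏ i ∈ Finset.Icc 1 m, (1 - (t ^ (d (2*i-1-1)))⁻¹)))) *
        (1 / (d n : ℂ)) := by ring
    _ = (1 / (2 * (Real.pi : ℂ)) ^ n) *
        (((2*(Real.pi:ℂ))^n *
          ((∏ i ∈ Finset.Icc 1 m,
              (Complex.exp (2*(Real.pi:ℂ)*Complex.I*((ω κ (2*i-1):ℝ):ℂ)) /
               (Complex.exp (2*(Real.pi:ℂ)*Complex.I*((ω κ (2*i-1):ℝ):ℂ)) - 1))) *
           (∏ i ∈ Finset.Icc 1 (m-1),
              (Complex.exp (2*(Real.pi:ℂ)*Complex.I*((ω κ (2*i):ℝ):ℂ)) /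
               (Complex.exp (2*(Real.pi:ℂ)*Complex.I*((ω κ (2*i):ℝ):ℂ)) - 1))))) *
         ((∏ i ∈ Finset.Icc 1 m, (1 - t ^ (d (2*i-1-1)))) *
          (∏ i ∈ Finset.Icc 1 m, (1 - (t ^ (d (2*i-1-1)))⁻¹)))) *
        (1 / (d n : ℂ)) := by rw [hGGE]
    _ = ((2*(Real.pi:ℂ))^n / (2*(Real.pi:ℂ))^n) *
        (((∏ i ∈ Finset.Icc 1 m,
            (Complex.exp (2*(Real.pi:ℂ)*Complex.I*((ω κ (2*i-1):ℝ):ℂ)) /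
             (Complex.exp (2*(Real.pi:ℂ)*Complex.I*((ω κ (2*i-1):ℝ):ℂ)) - 1))) *
          ((∏ i ∈ Finset.Icc 1 m, (1 - t ^ (d (2*i-1-1)))) *
           (∏ i ∈ Finset.Icc 1 m, (1 - (t ^ (d (2*i-1-1)))⁻¹)))) *
         (∏ i ∈ Finset.Icc 1 (m-1),
            (Complex.exp (2*(Real.pi:ℂ)*Complex.I*((ω κ (2*i):ℝ):ℂ)) /
             (Complex.exp (2*(Real.pi:ℂ)*Complex.I*((ω κ (2*i):ℝ):ℂ)) - 1)))) *
        (1 / (d n : ℂ)) := by ring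
    _ = ((∏ i ∈ Finset.Icc 1 m, (1 - t ^ (d (2*i-1-1)))) *
         (∏ i ∈ Finset.Icc 1 (m-1), (1 - t ^ (d (2*i-1))))⁻¹) *
        (1 / (d n : ℂ)) := by
        rw [div_self h2πn, one_mul, hodd, heven]
    _ = (1 / (d n : ℂ)) *
        ((∏ i ∈ Finset.Icc 1 m, (1 - t ^ (d (2*i-1-1)))) *
         (∏ i ∈ Finset.Icc 1 (m-1), (1 - t ^ (d (2*i-1))))⁻¹) := by ring
end

section
/- For n = 2m even, κ ∈ I'_n, define c^{(n)}_κ := ∏_{l=1}^n Γ(1 - ω_{κ,l}) · ∏_{i=1}^m (1 - e^{2πi ω_{κ,2i}}). Then (1/(2π)^n) · c^{(n)}_κ · e^{πi Σ_{l=1}^n (ω_{κ,l} - 1/2)} · (1/d_n) · c^{(n)}_{d_n - κ} = (1/d_n) p_n(e^{-2πi ω_{κ,1}}). -/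
open Complex

lemma cce_aux_trig (θ : ℝ) (h0 : 0 < θ) (h1 : θ < 1) :
    (1 / (2 * (Real.pi : ℂ))) * ((Real.pi : ℂ) / Complex.sin ((Real.pi : ℂ) * θ)) *
      Complex.exp ((Real.pi : ℂ) * Complex.I * ((θ : ℂ) - 1 / 2)) *
      (1 - Complex.exp (-(2 * (Real.pi : ℂ) * Complex.I * (θ : ℂ)))) = 1 := by
  have hπ : (Real.pi : ℂ) ≠ 0 := by exact_mod_cast Real.pi_ne_zero
  have hsin : Complex.sin ((Real.pi : ℂ) * θ) ≠ 0 := by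
    rw [← Complex.ofReal_mul, ← Complex.ofReal_sin]
    exact_mod_cast (Real.sin_pos_of_pos_of_lt_pi (by positivity)
      (by nlinarith [Real.pi_pos])).ne'
  set E := Complex.exp ((Real.pi : ℂ) * (θ : ℂ) * Complex.I) with hE
  have hEne : E ≠ 0 := Complex.exp_ne_zero _
  have hhalf : Complex.exp ((Real.pi : ℂ) * Complex.I * (-(1 / 2) : ℂ)) = -Complex.I := by
    rw [show ((Real.pi : ℂ) * Complex.I * (-(1 / 2) : ℂ)) = ((-(Real.pi / 2) : ℝ) : ℂ) * Complex.I
        by push_cast; ring, Complex.exp_mul_I, ← Complex.ofReal_cos, ← Complex.ofReal_sin]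
    simp [Real.cos_pi_div_two, Real.sin_pi_div_two]
  have hexpθ : Complex.exp ((Real.pi : ℂ) * Complex.I * ((θ : ℂ) - 1 / 2)) = E * (-Complex.I) := by
    rw [hE, ← hhalf, ← Complex.exp_add]
    congr 1; ring
  have hexp2 : Complex.exp (-(2 * (Real.pi : ℂ) * Complex.I * (θ : ℂ))) = (E * E)⁻¹ := by
    rw [show (-(2 * (Real.pi : ℂ) * Complex.I * (θ : ℂ)))
        = -((Real.pi : ℂ) * (θ : ℂ) * Complex.I + (Real.pi : ℂ) * (θ : ℂ) * Complex.I) by ring,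
      Complex.exp_neg, Complex.exp_add, hE]
  have hsin_eq : Complex.sin ((Real.pi : ℂ) * θ) = (1 - E * E) * Complex.I / (2 * E) := by
    rw [Complex.sin, neg_mul, Complex.exp_neg, hE]
    field_simp
    try ring
    try exact Or.inl trivial
  have hs : (1 : ℂ) - E * E ≠ 0 := by
    intro h; apply hsin; rw [hsin_eq, h, zero_mul, zero_div]
  rw [hexpθ, hexp2, hsin_eq]
  field_simp
  have hs2 : (1 : ℂ) - E ^ 2 ≠ 0 := by rwa [sq]
  rw [← neg_div, neg_sub, div_self hs2]

lemma cce_aux_odd (θ : ℝ) (h0 : 0 < θ) (h1 : θ < 1) :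
    (1 / (2 * (Real.pi : ℂ))) * Complex.Gamma (1 - (θ : ℂ)) *
      Complex.exp ((Real.pi : ℂ) * Complex.I * ((θ : ℂ) - 1 / 2)) * Complex.Gamma (θ : ℂ) *
      (1 - Complex.exp (-(2 * (Real.pi : ℂ) * Complex.I * (θ : ℂ)))) = 1 := by
  have hrefl := Complex.Gamma_mul_Gamma_one_sub (θ : ℂ)
  calc (1 / (2 * (Real.pi : ℂ))) * Complex.Gamma (1 - (θ : ℂ)) *
      Complex.exp ((Real.pi : ℂ) * Complex.I * ((θ : ℂ) - 1 / 2)) * Complex.Gamma (θ : ℂ) *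
      (1 - Complex.exp (-(2 * (Real.pi : ℂ) * Complex.I * (θ : ℂ))))
      = (1 / (2 * (Real.pi : ℂ))) * (Complex.Gamma (θ : ℂ) * Complex.Gamma (1 - (θ : ℂ))) *
      Complex.exp ((Real.pi : ℂ) * Complex.I * ((θ : ℂ) - 1 / 2)) *
      (1 - Complex.exp (-(2 * (Real.pi : ℂ) * Complex.I * (θ : ℂ)))) := by ring
    _ = 1 := by rw [hrefl]; exact cce_aux_trig θ h0 h1

lemma cce_aux_odd' (θ : ℝ) (h0 : 0 < θ) (h1 : θ < 1) :
    (1 / (2 * (Real.pi : ℂ))) * Complex.Gamma (1 - (θ : ℂ)) *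
      Complex.exp ((Real.pi : ℂ) * Complex.I * ((θ : ℂ) - 1 / 2)) * Complex.Gamma (θ : ℂ)
      = (1 - Complex.exp (-(2 * (Real.pi : ℂ) * Complex.I * (θ : ℂ))))⁻¹ := by
  have h := cce_aux_odd θ h0 h1
  exact eq_inv_of_mul_eq_one_left h

lemma cce_aux_even (θ : ℝ) (h0 : 0 < θ) (h1 : θ < 1) :
    (1 / (2 * (Real.pi : ℂ))) * Complex.Gamma (1 - (θ : ℂ)) *
      Complex.exp ((Real.pi : ℂ) * Complex.I * ((θ : ℂ) - 1 / 2)) * Complex.Gamma (θ : ℂ) *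
      ((1 - Complex.exp (2 * (Real.pi : ℂ) * Complex.I * (θ : ℂ))) *
       (1 - Complex.exp (-(2 * (Real.pi : ℂ) * Complex.I * (θ : ℂ)))))
      = 1 - Complex.exp (2 * (Real.pi : ℂ) * Complex.I * (θ : ℂ)) := by
  have h := cce_aux_odd θ h0 h1
  calc _ = ((1 / (2 * (Real.pi : ℂ))) * Complex.Gamma (1 - (θ : ℂ)) *
      Complex.exp ((Real.pi : ℂ) * Complex.I * ((θ : ℂ) - 1 / 2)) * Complex.Gamma (θ : ℂ) *
      (1 - Complex.exp (-(2 * (Real.pi : ℂ) * Complex.I * (θ : ℂ))))) *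
      (1 - Complex.exp (2 * (Real.pi : ℂ) * Complex.I * (θ : ℂ))) := by ring
    _ = _ := by rw [h, one_mul]

lemma cce_prod_pair {M : Type*} [CommMonoid M] (f : ℕ → M) (m : ℕ) :
    ∏ l ∈ Finset.Icc 1 (2 * m), f l = ∏ i ∈ Finset.Icc 1 m, (f (2 * i - 1) * f (2 * i)) := by
  induction m with
  | zero => simp
  | succ k ih =>
    rw [show 2 * (k + 1) = 2 * k + 1 + 1 by ring, Finset.prod_Icc_succ_top (by omega),
      Finset.prod_Icc_succ_top (by omega), Finset.prod_Icc_succ_top (by omega), ih,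
      show 2 * (k + 1) - 1 = 2 * k + 1 by omega, show 2 * (k + 1) = 2 * k + 1 + 1 by ring,
      mul_assoc]

lemma cce_exp_fract (x : ℝ) :
    Complex.exp (2 * (Real.pi : ℂ) * Complex.I * ((Int.fract x : ℝ) : ℂ))
      = Complex.exp (2 * (Real.pi : ℂ) * Complex.I * (x : ℂ)) := by
  conv_rhs => rw [← Int.floor_add_fract x]
  push_cast
  rw [mul_add, Complex.exp_add,
    show 2 * (Real.pi : ℂ) * Complex.I * ((⌊x⌋ : ℤ) : ℂ) = ((⌊x⌋ : ℤ) : ℂ) * (2 * Real.pi * Complex.I) by ring,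
    Complex.exp_int_mul_two_pi_mul_I, one_mul]

/-- Key coefficient computation (even case n = 2m):
(1/(2π)^n)·c_κ·e^{πiΣ_l(ω_{κ,l}-1/2)}·(1/d_n)·c_{d_n-κ} = (1/d_n)·p_n(e^{-2πiω_{κ,1}}). -/
theorem chain_coefficient_even (m n : ℕ) (hm : 1 ≤ m) (hn : n = 2 * m)
    (a : ℕ → ℕ) (ha : ∀ i, 2 ≤ a i)
    (d : ℕ → ℕ) (hd : ∀ i, d i = ∏ j ∈ Finset.Icc 1 i, a j)
    (ω : ℕ → ℕ → ℝ)
    (hω : ∀ κ l, ω κ l =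
      Int.fract ((-1 : ℝ) ^ (l - 1) * ((d (l - 1) : ℝ) / (d n : ℝ)) * (κ : ℝ)))
    (c : ℕ → ℂ)
    (hc : ∀ κ', c κ' =
      (∏ l ∈ Finset.Icc 1 n, Complex.Gamma (1 - (ω κ' l : ℂ))) *
      ∏ i ∈ Finset.Icc 1 m,
        (1 - Complex.exp (2 * Real.pi * Complex.I * (ω κ' (2 * i) : ℂ))))
    (κ : ℕ) (hκ1 : 1 ≤ κ) (hκ2 : κ ≤ d n) (hκ3 : ¬ a n ∣ κ) :
    (1 / (2 * (Real.pi : ℂ)) ^ n) * c κ *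
      Complex.exp (Real.pi * Complex.I *
        ((∑ l ∈ Finset.Icc 1 n, (ω κ l - 1 / 2) : ℝ) : ℂ)) *
      (1 / (d n : ℂ)) * c (d n - κ)
    = (1 / (d n : ℂ)) * ∏ i ∈ Finset.Icc 1 n,
        (1 - Complex.exp (-(2 * Real.pi * Complex.I * (ω κ 1 : ℂ))) ^ (d (i - 1)))
          ^ ((-1 : ℤ) ^ (n - i)) := by
  have hdpos : ∀ i, 0 < d i := fun i => by
    rw [hd i]; exact Finset.prod_pos fun j _ => by have := ha j; omega
  have hn1 : 1 ≤ n := by omega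
  have hNpos : 0 < d n := hdpos n
  have hNR : ((d n : ℝ)) ≠ 0 := Nat.cast_ne_zero.mpr hNpos.ne'
  have hNC : ((d n : ℂ)) ≠ 0 := Nat.cast_ne_zero.mpr hNpos.ne'
  have hd0 : d 0 = 1 := by rw [hd]; simp
  have hIcc : ∀ i : ℕ, Finset.Icc 1 i = Finset.Ioc 0 i := fun i => by
    ext x; simp [Finset.mem_Icc, Finset.mem_Ioc]; omega
  have haN : a n ∣ d n := by
    rw [hd n]; exact Finset.dvd_prod_of_mem a (by simp [Finset.mem_Icc]; omega)
  have hκN : κ < d n := lt_of_le_of_ne hκ2 fun h => hκ3 (h ▸ haN)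
  have hndvd : ∀ l, 1 ≤ l → l ≤ n → ¬ (d n ∣ d (l - 1) * κ) := by
    intro l h1 h2 hdvd
    apply hκ3
    have hQ : d (l - 1) * ∏ j ∈ Finset.Ioc (l - 1) n, a j = d n := by
      rw [hd, hd, hIcc, hIcc]
      exact Finset.prod_Ioc_consecutive a (Nat.zero_le _) (by omega)
    obtain ⟨t, ht⟩ := hdvd
    rw [← hQ] at ht
    have hκt : κ = (∏ j ∈ Finset.Ioc (l - 1) n, a j) * t :=
      Nat.eq_of_mul_eq_mul_left (hdpos (l - 1)) (by rw [ht]; ring)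
    have haQ : a n ∣ ∏ j ∈ Finset.Ioc (l - 1) n, a j :=
      Finset.dvd_prod_of_mem a (by simp [Finset.mem_Ioc]; omega)
    exact haQ.trans ⟨t, hκt⟩
  have hfract_ne : ∀ l, 1 ≤ l → l ≤ n →
      Int.fract ((d (l - 1) : ℝ) / (d n : ℝ) * κ) ≠ 0 := by
    intro l h1 h2 h
    apply hndvd l h1 h2
    have hfl := Int.floor_add_fract ((d (l - 1) : ℝ) / (d n : ℝ) * κ)
    rw [h, add_zero] at hfl
    have hreal : ((d (l - 1) * κ : ℕ) : ℝ) = (d n : ℝ) * (⌊(d (l - 1) : ℝ) / (d n : ℝ) * κ⌋ : ℝ) := by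
      push_cast
      rw [hfl]
      field_simp
    have hint : ((d (l - 1) * κ : ℕ) : ℤ) = (d n : ℤ) * ⌊(d (l - 1) : ℝ) / (d n : ℝ) * κ⌋ := by
      exact_mod_cast hreal
    exact Int.natCast_dvd_natCast.mp ⟨_, hint⟩
  have hodd_arg : ∀ l, Odd l → ω κ l = Int.fract ((d (l - 1) : ℝ) / (d n : ℝ) * κ) := by
    intro l hl
    rw [hω]
    congr 1
    rw [Even.neg_one_pow (Nat.Odd.sub_odd hl odd_one), one_mul]
  have heven_arg : ∀ l, Even l → 1 ≤ l →
      ω κ l = Int.fract (-((d (l - 1) : ℝ) / (d n : ℝ) * κ)) := by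
    intro l hl h1
    rw [hω]
    congr 1
    rw [Odd.neg_one_pow (Nat.Even.sub_odd h1 hl odd_one)]
    ring
  have hθpos : ∀ l, 1 ≤ l → l ≤ n → 0 < ω κ l ∧ ω κ l < 1 := by
    intro l h1 h2
    rcases Nat.even_or_odd l with he | ho
    · rw [heven_arg l he h1]
      have hne : Int.fract (-((d (l - 1) : ℝ) / (d n : ℝ) * κ)) ≠ 0 := fun h =>
        hfract_ne l h1 h2 (Int.fract_neg_eq_zero.mp h)
      exact ⟨lt_of_le_of_ne (Int.fract_nonneg _) (Ne.symm hne), Int.fract_lt_one _⟩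
    · rw [hodd_arg l ho]
      exact ⟨lt_of_le_of_ne (Int.fract_nonneg _) (Ne.symm (hfract_ne l h1 h2)),
        Int.fract_lt_one _⟩
  have hω' : ∀ l, 1 ≤ l → l ≤ n → ω (d n - κ) l = 1 - ω κ l := by
    intro l h1 h2
    have hargne : Int.fract ((-1 : ℝ) ^ (l - 1) * ((d (l - 1) : ℝ) / (d n : ℝ)) * κ) ≠ 0 := by
      rw [← hω]; exact (hθpos l h1 h2).1.ne'
    have hc1 : (((d n - κ : ℕ)) : ℝ) = (d n : ℝ) - κ := by
      rw [Nat.cast_sub hκ2]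
    have harg : (-1 : ℝ) ^ (l - 1) * ((d (l - 1) : ℝ) / (d n : ℝ)) * ((d n - κ : ℕ) : ℝ)
        = -((-1 : ℝ) ^ (l - 1) * ((d (l - 1) : ℝ) / (d n : ℝ)) * κ)
          + ((((-1 : ℤ)) ^ (l - 1) * (d (l - 1) : ℤ) : ℤ) : ℝ) := by
      rw [hc1]
      push_cast
      field_simp
      ring
    rw [hω (d n - κ) l, harg, Int.fract_add_intCast, Int.fract_neg hargne, ← hω]
  -- main computation
  rw [hc κ, hc (d n - κ)]
  have hP3 : (∏ l ∈ Finset.Icc 1 n, Complex.Gamma (1 - ((ω (d n - κ) l : ℝ) : ℂ)))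
      = ∏ l ∈ Finset.Icc 1 n, Complex.Gamma ((ω κ l : ℝ) : ℂ) := by
    refine Finset.prod_congr rfl fun l hl => ?_
    simp only [Finset.mem_Icc] at hl
    rw [hω' l hl.1 hl.2]
    congr 1
    push_cast
    ring
  have hP4 : (∏ i ∈ Finset.Icc 1 m,
        (1 - Complex.exp (2 * Real.pi * Complex.I * ((ω (d n - κ) (2 * i) : ℝ) : ℂ))))
      = ∏ i ∈ Finset.Icc 1 m,
        (1 - Complex.exp (-(2 * Real.pi * Complex.I * ((ω κ (2 * i) : ℝ) : ℂ)))) := by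
    refine Finset.prod_congr rfl fun i hi => ?_
    simp only [Finset.mem_Icc] at hi
    rw [hω' (2 * i) (by omega) (by omega)]
    congr 1
    rw [show (2 * (Real.pi : ℂ) * Complex.I * (((1 - ω κ (2 * i) : ℝ)) : ℂ))
        = 2 * (Real.pi : ℂ) * Complex.I + -(2 * (Real.pi : ℂ) * Complex.I * ((ω κ (2 * i) : ℝ) : ℂ))
        by push_cast; ring,
      Complex.exp_add, Complex.exp_two_pi_mul_I, one_mul]
  have hExp : Complex.exp ((Real.pi : ℂ) * Complex.I *
        ((∑ l ∈ Finset.Icc 1 n, (ω κ l - 1 / 2) : ℝ) : ℂ))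
      = ∏ l ∈ Finset.Icc 1 n,
          Complex.exp ((Real.pi : ℂ) * Complex.I * (((ω κ l : ℝ) : ℂ) - 1 / 2)) := by
    rw [← Complex.exp_sum]
    congr 1
    push_cast
    rw [Finset.mul_sum]
  have hPow : (1 / (2 * (Real.pi : ℂ)) ^ n) = ∏ _l ∈ Finset.Icc 1 n, (1 / (2 * (Real.pi : ℂ))) := by
    rw [Finset.prod_const, Nat.card_Icc, Nat.add_sub_cancel, one_div, one_div, inv_pow]
  have hF : (∏ l ∈ Finset.Icc 1 n, ((1 / (2 * (Real.pi : ℂ))) * Complex.Gamma (1 - ((ω κ l : ℝ) : ℂ)) *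
        Complex.exp ((Real.pi : ℂ) * Complex.I * (((ω κ l : ℝ) : ℂ) - 1 / 2)) *
        Complex.Gamma ((ω κ l : ℝ) : ℂ)))
      = (∏ _l ∈ Finset.Icc 1 n, (1 / (2 * (Real.pi : ℂ))))
        * (∏ l ∈ Finset.Icc 1 n, Complex.Gamma (1 - ((ω κ l : ℝ) : ℂ)))
        * (∏ l ∈ Finset.Icc 1 n,
            Complex.exp ((Real.pi : ℂ) * Complex.I * (((ω κ l : ℝ) : ℂ) - 1 / 2)))
        * (∏ l ∈ Finset.Icc 1 n, Complex.Gamma ((ω κ l : ℝ) : ℂ)) := by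
    rw [Finset.prod_mul_distrib, Finset.prod_mul_distrib, Finset.prod_mul_distrib]
  have hB : (∏ i ∈ Finset.Icc 1 m,
        ((1 - Complex.exp (2 * Real.pi * Complex.I * ((ω κ (2 * i) : ℝ) : ℂ))) *
         (1 - Complex.exp (-(2 * Real.pi * Complex.I * ((ω κ (2 * i) : ℝ) : ℂ))))))
      = (∏ i ∈ Finset.Icc 1 m,
          (1 - Complex.exp (2 * Real.pi * Complex.I * ((ω κ (2 * i) : ℝ) : ℂ))))
        * (∏ i ∈ Finset.Icc 1 m,
          (1 - Complex.exp (-(2 * Real.pi * Complex.I * ((ω κ (2 * i) : ℝ) : ℂ))))) :=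
    Finset.prod_mul_distrib
  -- the T-power computations
  have hT : ∀ l, 1 ≤ l → l ≤ n →
      Complex.exp (-(2 * Real.pi * Complex.I * ((ω κ 1 : ℝ) : ℂ))) ^ (d (l - 1))
      = Complex.exp (-(2 * Real.pi * Complex.I * (((d (l - 1) : ℝ) / (d n : ℝ) * κ : ℝ) : ℂ))) := by
    intro l h1 h2
    have hω1 : ω κ 1 = (κ : ℝ) / (d n : ℝ) := by
      rw [hodd_arg 1 odd_one]
      simp only [Nat.sub_self, hd0, Nat.cast_one]
      rw [Int.fract_eq_self.mpr ⟨by positivity, by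
        rw [div_mul_eq_mul_div, mul_comm, ← div_mul_eq_mul_div]
        calc (κ : ℝ) / (d n : ℝ) * 1 = (κ : ℝ) / (d n : ℝ) := mul_one _
          _ < 1 := by rw [div_lt_one (by positivity)]; exact_mod_cast hκN⟩]
      ring
    rw [← Complex.exp_nat_mul]
    congr 1
    rw [hω1]
    push_cast
    field_simp
    try ring
    try exact Or.inl trivial
  have hTodd : ∀ l, Odd l → 1 ≤ l → l ≤ n →
      Complex.exp (-(2 * Real.pi * Complex.I * ((ω κ 1 : ℝ) : ℂ))) ^ (d (l - 1))
      = Complex.exp (-(2 * Real.pi * Complex.I * ((ω κ l : ℝ) : ℂ))) := by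
    intro l ho h1 h2
    rw [hT l h1 h2, hodd_arg l ho, Complex.exp_neg, Complex.exp_neg, cce_exp_fract]
  have hTeven : ∀ l, Even l → 1 ≤ l → l ≤ n →
      Complex.exp (-(2 * Real.pi * Complex.I * ((ω κ 1 : ℝ) : ℂ))) ^ (d (l - 1))
      = Complex.exp (2 * Real.pi * Complex.I * ((ω κ l : ℝ) : ℂ)) := by
    intro l he h1 h2
    rw [hT l h1 h2, heven_arg l he h1, cce_exp_fract]
    congr 1
    push_cast
    ring
  have key : (∏ l ∈ Finset.Icc 1 n, ((1 / (2 * (Real.pi : ℂ))) * Complex.Gamma (1 - ((ω κ l : ℝ) : ℂ)) *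
        Complex.exp ((Real.pi : ℂ) * Complex.I * (((ω κ l : ℝ) : ℂ) - 1 / 2)) *
        Complex.Gamma ((ω κ l : ℝ) : ℂ)))
      * (∏ i ∈ Finset.Icc 1 m,
        ((1 - Complex.exp (2 * Real.pi * Complex.I * ((ω κ (2 * i) : ℝ) : ℂ))) *
         (1 - Complex.exp (-(2 * Real.pi * Complex.I * ((ω κ (2 * i) : ℝ) : ℂ))))))
      = ∏ i ∈ Finset.Icc 1 n,
        (1 - Complex.exp (-(2 * Real.pi * Complex.I * (ω κ 1 : ℂ))) ^ (d (i - 1)))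
          ^ ((-1 : ℤ) ^ (n - i)) := by
    rw [hn, cce_prod_pair, cce_prod_pair, ← Finset.prod_mul_distrib]
    refine Finset.prod_congr rfl fun i hi => ?_
    simp only [Finset.mem_Icc] at hi
    have hb1 : 1 ≤ 2 * i - 1 := by omega
    have hb2 : 2 * i - 1 ≤ n := by omega
    have hb3 : 1 ≤ 2 * i := by omega
    have hb4 : 2 * i ≤ n := by omega
    have hodd1 : Odd (2 * i - 1) := ⟨i - 1, by omega⟩
    have heven2 : Even (2 * i) := ⟨i, by omega⟩
    have hz1 : ((-1 : ℤ)) ^ (2 * m - (2 * i - 1)) = -1 := by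
      rw [show 2 * m - (2 * i - 1) = 2 * (m - i) + 1 by omega, pow_succ, pow_mul]
      norm_num
    have hz2 : ((-1 : ℤ)) ^ (2 * m - 2 * i) = 1 := by
      rw [show 2 * m - 2 * i = 2 * (m - i) by omega, pow_mul]
      norm_num
    have h2m : (2 : ℕ) * m = n := hn.symm
    rw [hz1, hz2, zpow_neg_one, zpow_one,
      hTodd (2 * i - 1) hodd1 hb1 hb2, hTeven (2 * i) heven2 hb3 hb4]
    have hp1 := hθpos (2 * i - 1) hb1 hb2
    have hp2 := hθpos (2 * i) hb3 hb4
    rw [cce_aux_odd' (ω κ (2 * i - 1)) hp1.1 hp1.2]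
    have he := cce_aux_even (ω κ (2 * i)) hp2.1 hp2.2
    linear_combination
      (1 - Complex.exp (-(2 * (Real.pi : ℂ) * Complex.I * ((ω κ (2 * i - 1) : ℝ) : ℂ))))⁻¹ * he
  rw [hP3, hP4, hExp, hPow, ← key, hF, hB]
  ring
end

section
/- The diagonal matrix Q̃^{(n)} defined by entries Q̃_{κκ} = Σ_{l=1}^n (ω_{κ,l} - 1/2) for κ ∈ I'_n (and recursively Q̃^{(n-2)} on I_{n-2}) anticommutes with η^{(n)}: Q̃^{(n)} η^{(n)} = -η^{(n)} Q̃^{(n)}, where η^{(n)} is defined by η^{(n)}_{κλ} = (1/d_n) δ_{κ+λ, d_n} for κ,λ ∈ I'_n and η^{(n)} = diag-block with -(1/a_n) η^{(n-2)} on the I_{n-2} block. -/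
/-- d_i = a_1 ··· a_i, with d_0 = 1. -/
def chainProd (a : ℕ → ℕ) (i : ℕ) : ℕ := ∏ j ∈ Finset.Icc 1 i, a j

/-- The index set I_n = I'_n ⊔ I_{n-2}, where
I'_n = {κ ∈ {1,...,d_n} : a_n ∤ κ}, I_0 = {pt}, I_1 = I'_1. -/
def Iset (a : ℕ → ℕ) : ℕ → Type
  | 0 => PUnit
  | 1 => {κ : ℕ // κ ∈ Finset.Icc 1 (chainProd a 1) ∧ ¬ a 1 ∣ κ}
  | (n + 2) => {κ : ℕ // κ ∈ Finset.Icc 1 (chainProd a (n + 2)) ∧ ¬ a (n + 2) ∣ κ} ⊕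
      Iset a n

/-- The entry Σ_{l=1}^n (ω_{κ,l} - 1/2) of Q̃^{(n)} for κ ∈ I'_n,
with ω_{κ,l} = frac((-1)^{l-1}(d_{l-1}/d_n)κ). -/
noncomputable def Qval (a : ℕ → ℕ) (n : ℕ) (κ : ℕ) : ℝ :=
  ∑ l ∈ Finset.Icc 1 n,
    (Int.fract ((-1 : ℝ) ^ (l - 1) * ((chainProd a (l - 1) : ℝ) / (chainProd a n : ℝ))
      * (κ : ℝ)) - 1 / 2)

/-- The diagonal matrix Q̃^{(n)} (as a function on the index set I_n):
Q̃^{(0)} = (0), and on the I'_n block the entries are Σ_l (ω_{κ,l} - 1/2),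
recursively Q̃^{(n-2)} on the I_{n-2} block. -/
noncomputable def Qdiag (a : ℕ → ℕ) : (n : ℕ) → Iset a n → ℝ
  | 0, _ => 0
  | 1, κ => Qval a 1 κ.1
  | (n + 2), Sum.inl κ => Qval a (n + 2) κ.1
  | (n + 2), Sum.inr x => Qdiag a n x

/-- The bilinear form η^{(n)}: η^{(0)} = (1), η^{(n)}_{κλ} = (1/d_n) δ_{κ+λ,d_n}
on the I'_n block, and -(1/a_n)·η^{(n-2)} on the I_{n-2} block. -/
noncomputable def etaMat (a : ℕ → ℕ) : (n : ℕ) → Iset a n → Iset a n → ℝ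
  | 0, _, _ => 1
  | 1, κ, lam => if κ.1 + lam.1 = chainProd a 1 then 1 / (chainProd a 1 : ℝ) else 0
  | (n + 2), Sum.inl κ, Sum.inl lam =>
      if κ.1 + lam.1 = chainProd a (n + 2) then 1 / (chainProd a (n + 2) : ℝ) else 0
  | (n + 2), Sum.inr x, Sum.inr y => -(1 / (a (n + 2) : ℝ)) * etaMat a n x y
  | (n + 2), Sum.inl _, Sum.inr _ => 0
  | (n + 2), Sum.inr _, Sum.inl _ => 0


lemma chainProd_pos' (a : ℕ → ℕ) (ha : ∀ i, 2 ≤ a i) (i : ℕ) : 0 < chainProd a i :=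
  Finset.prod_pos fun j _ => lt_of_lt_of_le Nat.zero_lt_two (ha j)

lemma dvd_of_fract_div_eq_zero' {p q : ℕ} (hq : 0 < q)
    (h : Int.fract ((p : ℝ) / (q : ℝ)) = 0) : q ∣ p := by
  have h2 : (p:ℝ)/q - ⌊(p:ℝ)/q⌋ = 0 := h
  have hq' : (q : ℝ) ≠ 0 := by positivity
  have : (p : ℝ) = (⌊(p : ℝ) / q⌋ : ℝ) * q := by
    field_simp at h2 ⊢; linarith
  have hz : (p : ℤ) = ⌊(p : ℝ) / q⌋ * q := by exact_mod_cast this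
  have : (q : ℤ) ∣ (p : ℤ) := ⟨⌊(p:ℝ)/q⌋, by linarith⟩
  exact_mod_cast this

lemma chainProd_split' (a : ℕ → ℕ) {l n : ℕ} (hl1 : 1 ≤ l) (hln : l ≤ n) :
    chainProd a (l-1) * (∏ j ∈ Finset.Ioc (l-1) n, a j) = chainProd a n := by
  have e : ∀ i : ℕ, chainProd a i = ∏ j ∈ Finset.Ioc 0 i, a j := by
    intro i; unfold chainProd; congr 1
  rw [e, e]
  exact Finset.prod_Ioc_consecutive a (Nat.zero_le _) (by omega)

lemma Qval_add_eq_zero' (a : ℕ → ℕ) (ha : ∀ i, 2 ≤ a i) (n κ : ℕ)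
    (hκD : κ ≤ chainProd a n) (hnd : ¬ a n ∣ κ) :
    Qval a n κ + Qval a n (chainProd a n - κ) = 0 := by
  rw [Qval, Qval, ← Finset.sum_add_distrib]
  apply Finset.sum_eq_zero
  intro l hl
  obtain ⟨hl1, hln⟩ := Finset.mem_Icc.mp hl
  have hD : 0 < chainProd a n := chainProd_pos' a ha n
  set c := chainProd a (l-1) with hc
  set D := chainProd a n with hDdef
  have hDne : (D : ℝ) ≠ 0 := by positivity
  have hfr : Int.fract ((-1:ℝ)^(l-1) * ((c:ℝ)/D) * κ) ≠ 0 := by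
    intro h0
    have hdvd : D ∣ c * κ := by
      rcases Nat.even_or_odd (l-1) with he | ho
      · rw [he.neg_one_pow] at h0
        apply dvd_of_fract_div_eq_zero' hD
        rw [show ((c*κ : ℕ):ℝ)/D = 1 * ((c:ℝ)/D) * κ by push_cast; ring]
        exact h0
      · rw [ho.neg_one_pow] at h0
        apply dvd_of_fract_div_eq_zero' hD
        rw [show ((c*κ : ℕ):ℝ)/D = -(-1 * ((c:ℝ)/D) * κ) by push_cast; ring]
        exact Int.fract_neg_eq_zero.mpr h0
    set m := ∏ j ∈ Finset.Ioc (l-1) n, a j with hm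
    have hsplit : c * m = D := chainProd_split' a hl1 hln
    have ham : a n ∣ m := Finset.dvd_prod_of_mem a (by simp [Finset.mem_Ioc]; omega)
    have hcpos : 0 < c := chainProd_pos' a ha _
    rw [← hsplit] at hdvd
    exact hnd (ham.trans ((Nat.mul_dvd_mul_iff_left hcpos).mp hdvd))
  have hcast : ((D - κ : ℕ) : ℝ) = (D:ℝ) - κ := by
    push_cast [hκD]; ring
  have hz : (-1:ℝ)^(l-1) * ((c:ℝ)/D) * ((D:ℝ) - κ)
      = (((-1)^(l-1) * c : ℤ) : ℝ) + -((-1:ℝ)^(l-1) * ((c:ℝ)/D) * κ) := by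
    push_cast; field_simp; ring
  rw [hcast, hz, Int.fract_intCast_add, Int.fract_neg hfr]
  ring

theorem Qanti_aux (a : ℕ → ℕ) (ha : ∀ i, 2 ≤ a i) :
    ∀ n, ∀ x y : Iset a n,
    Qdiag a n x * etaMat a n x y = -(etaMat a n x y * Qdiag a n y)
  | 0, _, _ => by simp [Qdiag, etaMat]
  | 1, κ, lam => by
      simp only [Qdiag, etaMat]
      split_ifs with h
      · have hκ2 := κ.2
        have hl2 := lam.2
        have hκmem := Finset.mem_Icc.mp hκ2.1
        have hlmem := Finset.mem_Icc.mp hl2.1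
        have key := Qval_add_eq_zero' a ha 1 κ.1 (by omega) hκ2.2
        have heq : chainProd a 1 - κ.1 = lam.1 := by omega
        rw [heq] at key
        linear_combination (1/(chainProd a 1 : ℝ)) * key
      · ring
  | (n+2), Sum.inl κ, Sum.inl lam => by
      simp only [Qdiag, etaMat]
      split_ifs with h
      · have hκ2 := κ.2
        have hl2 := lam.2
        have hκmem := Finset.mem_Icc.mp hκ2.1
        have hlmem := Finset.mem_Icc.mp hl2.1
        have key := Qval_add_eq_zero' a ha (n+2) κ.1 (by omega) hκ2.2
        have heq : chainProd a (n+2) - κ.1 = lam.1 := by omega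
        rw [heq] at key
        linear_combination (1/(chainProd a (n+2) : ℝ)) * key
      · ring
  | (n+2), Sum.inl _, Sum.inr _ => by simp [Qdiag, etaMat]
  | (n+2), Sum.inr _, Sum.inl _ => by simp [Qdiag, etaMat]
  | (n+2), Sum.inr x, Sum.inr y => by
      have h := Qanti_aux a ha n x y
      simp only [Qdiag, etaMat]
      linear_combination (-(1/(a (n+2) : ℝ))) * h

/-- The diagonal matrix Q̃^{(n)} anticommutes with η^{(n)}: Q̃η = -ηQ̃. -/
theorem Qdiag_anticommutes_eta (a : ℕ → ℕ) (ha : ∀ i, 2 ≤ a i) (n : ℕ)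
    (x y : Iset a n) :
    Qdiag a n x * etaMat a n x y = -(etaMat a n x y * Qdiag a n y) := by
  exact Qanti_aux a ha n x y
end
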